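/- arXiv:math/0610938 — 9 statements merged into one kernel-verified Lean document; each statement's English description precedes it below -/
import Mathlib

section
/- Let V be a finite-dimensional real inner product space (positive definite symmetric bilinear form) and let (v_i)_{i∈I} be a finite nonempty family of vectors in V such that ⟨v_i, v_j⟩ ≤ 0 for all i ≠ j. Assume the family is indecomposable: the index set I cannot be written as a disjoint union of two nonempty subsets I₁ and I₂ with ⟨v_i, v_j⟩ = 0 for all i ∈ I₁ and j ∈ I₂. Then either the vectors (v_i)_{i∈I} are linearly independent, or the span of the v_i has dimension |I| − 1 and there exists a linear dependence Σ_{i∈I} a_i v_i = 0 in which all the coefficients a_i are strictly positive real numbers. -/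
open scoped RealInnerProductSpace

/-!
If `g` is a linear relation among the `vᵢ`, then `w := ∑ gᵢ⁺ • vᵢ = ∑ gᵢ⁻ • vᵢ` and
`⟪w, w⟫ = ∑ gᵢ⁺ gⱼ⁻ ⟪vᵢ, vⱼ⟫ ≤ 0`, since `gᵢ⁺ gᵢ⁻ = 0` and the off-diagonal inner products are
nonpositive; so the positive part of a relation is again a relation. Pairing a nonnegative
relation `d` with a vector `vⱼ` for which `dⱼ = 0` shows that `vⱼ` is orthogonal to every `vᵢ`
with `dᵢ > 0`; by indecomposability a nonzero nonnegative relation is therefore strictly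
positive. Given such a `d`, subtracting from any relation `c` the largest multiple of `d` that
keeps it nonnegative leaves a nonnegative relation with a zero coefficient, hence zero. So the
relations form the line `ℝ ∙ d`, and rank–nullity gives the dimension of the span.
-/

section

variable {V : Type*} [NormedAddCommGroup V] [InnerProductSpace ℝ V] {I : Type*} (v : I → V)

def IsDecomposable : Prop :=
  ∃ I₁ I₂ : Set I, I₁.Nonempty ∧ I₂.Nonempty ∧ Disjoint I₁ I₂ ∧
    I₁ ∪ I₂ = Set.univ ∧ ∀ i ∈ I₁, ∀ j ∈ I₂, ⟪v i, v j⟫ = 0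

variable [Fintype I]

lemma inner_sum_smul_nonpos_of_mul_eq_zero (hneg : ∀ i j : I, i ≠ j → ⟪v i, v j⟫ ≤ 0)
    {a b : I → ℝ} (ha : 0 ≤ a) (hb : 0 ≤ b) (hab : ∀ i, a i * b i = 0) :
    ⟪∑ i, a i • v i, ∑ j, b j • v j⟫ ≤ 0 := by
  rw [sum_inner]
  refine Finset.sum_nonpos fun i _ => ?_
  rw [inner_sum]
  refine Finset.sum_nonpos fun j _ => ?_
  rw [real_inner_smul_left, real_inner_smul_right, ← mul_assoc]
  rcases eq_or_ne i j with rfl | hij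
  · rw [hab, zero_mul]
  · exact mul_nonpos_of_nonneg_of_nonpos (mul_nonneg (ha i) (hb j)) (hneg i j hij)

lemma sum_posPart_smul_eq_zero (hneg : ∀ i j : I, i ≠ j → ⟪v i, v j⟫ ≤ 0)
    {g : I → ℝ} (hg : ∑ i, g i • v i = 0) : ∑ i, (g i)⁺ • v i = 0 := by
  have hsplit : ∑ i, (g i)⁺ • v i = ∑ i, (g i)⁻ • v i := by
    rw [← sub_eq_zero, ← Finset.sum_sub_distrib]
    simpa only [← sub_smul, posPart_sub_negPart] using hg
  have hdisj : ∀ i, (g i)⁺ * (g i)⁻ = 0 := fun i => by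
    rcases le_total (g i) 0 with h | h
    · rw [posPart_eq_zero.2 h, zero_mul]
    · rw [negPart_eq_zero.2 h, mul_zero]
  have hself := inner_sum_smul_nonpos_of_mul_eq_zero v hneg
    (fun i => posPart_nonneg (g i)) (fun i => negPart_nonneg (g i)) hdisj
  rw [← hsplit] at hself
  exact real_inner_self_nonpos.mp hself

lemma exists_nonneg_relation_of_not_linearIndependent
    (hneg : ∀ i j : I, i ≠ j → ⟪v i, v j⟫ ≤ 0) (hv : ¬ LinearIndependent ℝ v) :
    ∃ d : I → ℝ, 0 ≤ d ∧ ∑ i, d i • v i = 0 ∧ d ≠ 0 := by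
  obtain ⟨g, hg, i, hgi⟩ := Fintype.not_linearIndependent_iff.mp hv
  wlog hpos : 0 < g i generalizing g
  · refine this (-g) (by simp [neg_smul, hg]) (neg_ne_zero.2 hgi) ?_
    exact neg_pos.2 ((not_lt.1 hpos).lt_of_ne hgi)
  exact ⟨fun j => (g j)⁺, fun j => posPart_nonneg (g j), sum_posPart_smul_eq_zero v hneg hg,
    fun h => (posPart_pos_iff.2 hpos).ne' (congrFun h i)⟩

lemma isDecomposable_of_nonneg_relation (hneg : ∀ i j : I, i ≠ j → ⟪v i, v j⟫ ≤ 0)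
    {d : I → ℝ} (hd : 0 ≤ d) (hrel : ∑ i, d i • v i = 0) {i j : I} (hi : 0 < d i)
    (hj : d j = 0) : IsDecomposable v := by
  refine ⟨{k | 0 < d k}, {k | 0 < d k}ᶜ, ⟨i, hi⟩, ⟨j, by simp [hj]⟩, disjoint_compl_right,
    Set.union_compl_self _, fun k hk l hl => ?_⟩
  have hl : d l = 0 := le_antisymm (not_lt.mp hl) (hd l)
  have hterms : ∀ m ∈ Finset.univ, d m * ⟪v l, v m⟫ ≤ 0 := fun m _ => by
    rcases eq_or_ne m l with rfl | hml
    · rw [hl, zero_mul]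
    · exact mul_nonpos_of_nonneg_of_nonpos (hd m) (hneg l m hml.symm)
  have hsum : ∑ m, d m * ⟪v l, v m⟫ = 0 := by
    simpa only [inner_sum, real_inner_smul_right, inner_zero_right] using congrArg (⟪v l, ·⟫) hrel
  have hk0 := (Finset.sum_eq_zero_iff_of_nonpos hterms).mp hsum k (Finset.mem_univ k)
  rw [real_inner_comm]
  exact (mul_eq_zero.mp hk0).resolve_left (ne_of_gt hk)

lemma eq_zero_or_forall_pos_of_nonneg_relation (hneg : ∀ i j : I, i ≠ j → ⟪v i, v j⟫ ≤ 0)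
    (hindec : ¬ IsDecomposable v) {d : I → ℝ} (hd : 0 ≤ d) (hrel : ∑ i, d i • v i = 0) :
    d = 0 ∨ ∀ i, 0 < d i := by
  by_contra! h
  obtain ⟨hne, j, hj⟩ := h
  obtain ⟨i, hi⟩ := Function.ne_iff.mp hne
  exact hindec (isDecomposable_of_nonneg_relation v hneg hd hrel ((hd i).lt_of_ne' hi)
    (le_antisymm hj (hd j)))

variable [Nonempty I]

lemma ker_linearCombination_eq_span_singleton (hneg : ∀ i j : I, i ≠ j → ⟪v i, v j⟫ ≤ 0)
    (hindec : ¬ IsDecomposable v) {d : I → ℝ} (hd : ∀ i, 0 < d i)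
    (hrel : ∑ i, d i • v i = 0) :
    LinearMap.ker (Fintype.linearCombination ℝ v) = ℝ ∙ d := by
  have hd_ker : d ∈ LinearMap.ker (Fintype.linearCombination ℝ v) := by
    rwa [LinearMap.mem_ker, Fintype.linearCombination_apply]
  refine le_antisymm (fun c hc => ?_) ((Submodule.span_singleton_le_iff_mem _ _).2 hd_ker)
  obtain ⟨i₀, -, hmin⟩ := Finset.univ.exists_min_image (fun i => c i / d i) Finset.univ_nonempty
  set t := c i₀ / d i₀
  have hnonneg : 0 ≤ c - t • d := fun i => by
    have hle := (le_div_iff₀ (hd i)).mp (hmin i (Finset.mem_univ i))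
    simp only [Pi.zero_apply, Pi.sub_apply, Pi.smul_apply, smul_eq_mul]
    linarith
  have hrel' : ∑ i, (c - t • d) i • v i = 0 := by
    rw [← Fintype.linearCombination_apply, ← LinearMap.mem_ker]
    exact sub_mem hc (Submodule.smul_mem _ t hd_ker)
  rcases eq_zero_or_forall_pos_of_nonneg_relation v hneg hindec hnonneg hrel' with h | h
  · exact Submodule.mem_span_singleton.2 ⟨t, (sub_eq_zero.1 h).symm⟩
  · simpa [t, div_mul_cancel₀ _ (hd i₀).ne'] using h i₀

lemma finrank_span_range_eq_card_sub_one (hneg : ∀ i j : I, i ≠ j → ⟪v i, v j⟫ ≤ 0)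
    (hindec : ¬ IsDecomposable v) {d : I → ℝ} (hd : ∀ i, 0 < d i)
    (hrel : ∑ i, d i • v i = 0) :
    Module.finrank ℝ (Submodule.span ℝ (Set.range v)) = Fintype.card I - 1 := by
  have hd0 : d ≠ 0 := fun h => (hd (Classical.arbitrary I)).ne' (congrFun h _)
  have hrank := LinearMap.finrank_range_add_finrank_ker (Fintype.linearCombination ℝ v)
  rw [Fintype.range_linearCombination,
    ker_linearCombination_eq_span_singleton v hneg hindec hd hrel, finrank_span_singleton hd0,
    Module.finrank_fintype_fun_eq_card] at hrank
  omega

end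

theorem stmt0_general {V : Type*} [NormedAddCommGroup V] [InnerProductSpace ℝ V]
    {I : Type*} [Fintype I] (v : I → V)
    (hneg : ∀ i j : I, i ≠ j → ⟪v i, v j⟫ ≤ 0)
    (hindec : ¬ ∃ I₁ I₂ : Set I, I₁.Nonempty ∧ I₂.Nonempty ∧ Disjoint I₁ I₂ ∧
        I₁ ∪ I₂ = Set.univ ∧ ∀ i ∈ I₁, ∀ j ∈ I₂, ⟪v i, v j⟫ = 0) :
    LinearIndependent ℝ v ∨
      (Module.finrank ℝ (Submodule.span ℝ (Set.range v)) = Fintype.card I - 1 ∧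
        ∃ a : I → ℝ, (∀ i, 0 < a i) ∧ ∑ i, a i • v i = 0) := by
  by_cases hli : LinearIndependent ℝ v
  · exact Or.inl hli
  obtain ⟨d, hd, hrel, hd0⟩ := exists_nonneg_relation_of_not_linearIndependent v hneg hli
  have hpos : ∀ i, 0 < d i :=
    (eq_zero_or_forall_pos_of_nonneg_relation v hneg hindec hd hrel).resolve_left hd0
  obtain ⟨i, -⟩ := Function.ne_iff.mp hd0
  have : Nonempty I := ⟨i⟩
  exact Or.inr ⟨finrank_span_range_eq_card_sub_one v hneg hindec hpos hrel, d, hpos, hrel⟩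

/-- For a finite nonempty family of vectors in a real inner product space with
pairwise nonpositive inner products which is indecomposable, either the family is linearly
independent, or its span has dimension `|I| - 1` and there is a linear dependence with all
coefficients strictly positive. -/
theorem stmt0 {V : Type*} [NormedAddCommGroup V] [InnerProductSpace ℝ V]
    [FiniteDimensional ℝ V] {I : Type*} [Fintype I] [Nonempty I] (v : I → V)
    (hneg : ∀ i j : I, i ≠ j → ⟪v i, v j⟫ ≤ 0)
    (hindec : ¬ ∃ I₁ I₂ : Set I, I₁.Nonempty ∧ I₂.Nonempty ∧ Disjoint I₁ I₂ ∧
        I₁ ∪ I₂ = Set.univ ∧ ∀ i ∈ I₁, ∀ j ∈ I₂, ⟪v i, v j⟫ = 0) :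
    LinearIndependent ℝ v ∨
      (Module.finrank ℝ (Submodule.span ℝ (Set.range v)) = Fintype.card I - 1 ∧
        ∃ a : I → ℝ, (∀ i, 0 < a i) ∧ ∑ i, a i • v i = 0) :=
  stmt0_general v hneg hindec
end

section
/- Let K be a field, V a finite-dimensional K-vector space, and s : V → V an invertible K-linear map of finite multiplicative order d > 1 which fixes pointwise some hyperplane of V (a linear subspace of codimension 1). Then s is diagonalizable — that is, V is spanned by eigenvectors of s (equivalently, V is the sum of the eigenspaces of s) — if and only if d is not divisible by the characteristic of K. In particular, such an s is always diagonalizable when char K = 0. -/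
/-! Write `s = 1 + n`. As `n` vanishes on a hyperplane it has rank at most one, so `n * n = c • n`
for a scalar `c`. If `c ≠ 0`, every vector splits into a vector killed by `n` and one in the range
of `n`, i.e. into eigenvectors of `s` for `1` and `1 + c`. If `c = 0`, then `s ^ k = 1 + k • n`,
and `s ^ d = 1` with `n ≠ 0` forces `(d : K) = 0`. Conversely, if `s` is diagonalizable and
`d = p * m` with `p = char K`, each eigenvalue `μ` has `(μ ^ m) ^ p = 1`, hence `μ ^ m = 1` by
injectivity of Frobenius, so `s ^ m = 1`, contradicting `orderOf s = d`. -/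

open Module

theorem one_add_pow_of_sq_eq_zero {A : Type*} [Ring A] {n : A} (hn : n ^ 2 = 0) (k : ℕ) :
    (1 + n) ^ k = 1 + k • n := by
  induction k with
  | zero => simp
  | succ k ih =>
    rw [pow_succ, ih, mul_one_add, add_mul, smul_mul_assoc, ← sq, hn, smul_zero, add_zero,
      succ_nsmul, one_mul]
    abel

theorem cast_orderOf_eq_zero_of_sq_sub_one_eq_zero {K A : Type*} [Field K] [Ring A] [Algebra K A]
    {x : A} (hx : (x - 1) ^ 2 = 0) (hx1 : x ≠ 1) : (orderOf x : K) = 0 := by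
  have h := one_add_pow_of_sq_eq_zero hx (orderOf x)
  rw [add_sub_cancel, pow_orderOf_eq_one, left_eq_add, ← Nat.cast_smul_eq_nsmul K] at h
  exact (smul_eq_zero.mp h).resolve_right (sub_ne_zero.mpr hx1)

theorem LinearMap.finrank_range_add_finrank_le_of_le_ker {K V W : Type*} [DivisionRing K]
    [AddCommGroup V] [Module K V] [AddCommGroup W] [Module K W] [FiniteDimensional K V]
    {f : V →ₗ[K] W} {H : Submodule K V} (hH : H ≤ ker f) :
    finrank K (range f) + finrank K H ≤ finrank K V :=
  f.finrank_range_add_finrank_ker ▸ Nat.add_le_add_left (Submodule.finrank_mono hH) _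

namespace Module.End

variable {K V : Type*} [Field K] [AddCommGroup V] [Module K V]

theorem exists_mul_self_eq_smul_of_finrank_range_le_one [FiniteDimensional K V] {f : End K V}
    (hf : finrank K (LinearMap.range f) ≤ 1) : ∃ c : K, f * f = c • f := by
  rcases Nat.le_one_iff_eq_zero_or_eq_one.mp hf with h0 | h1
  · rw [Submodule.finrank_eq_zero, LinearMap.range_eq_bot] at h0
    exact ⟨0, by simp [h0]⟩
  · obtain ⟨c, hc, -⟩ := LinearMap.existsUnique_eq_smul_id_of_finrank_eq_one h1
      (f.restrict fun x _ ↦ LinearMap.mem_range_self f x)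
    refine ⟨c, LinearMap.ext fun v ↦ ?_⟩
    simpa using congr_arg Subtype.val (LinearMap.congr_fun hc ⟨f v, LinearMap.mem_range_self f v⟩)

theorem iSup_eigenspace_eq_top_of_sub_one_mul_self_eq_smul {f : End K V} {c : K}
    (hc : (f - 1) * (f - 1) = c • (f - 1)) (hc0 : c ≠ 0) :
    ⨆ μ : K, f.eigenspace μ = ⊤ := by
  obtain ⟨n, rfl⟩ : ∃ n, f = 1 + n := ⟨f - 1, by abel⟩
  rw [add_sub_cancel_left] at hc
  have hmem (μ : K) (v : V) (hv : n v = (μ - 1) • v) : v ∈ (1 + n).eigenspace μ := by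
    rw [mem_eigenspace_iff, LinearMap.add_apply, hv, sub_smul, one_smul, one_apply, add_sub_cancel]
  refine eq_top_iff.mpr fun v _ ↦ ?_
  have hnn : n (n v) = c • n v := LinearMap.congr_fun hc v
  -- `v = (v - c⁻¹ n v) + c⁻¹ n v`, where `n` kills the first summand and scales the second by `c`
  rw [← sub_add_cancel v (c⁻¹ • n v)]
  refine Submodule.add_mem _ (Submodule.mem_iSup_of_mem 1 (hmem _ _ ?_))
    (Submodule.mem_iSup_of_mem (1 + c) (hmem _ _ ?_))
  · rw [map_sub, map_smul, hnn, smul_smul, inv_mul_cancel₀ hc0, one_smul, sub_self, sub_self,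
      zero_smul]
  · rw [map_smul, hnn, add_sub_cancel_left, smul_comm]

theorem pow_eq_one_of_pow_expChar_pow_mul_eq_one {f : End K V}
    (hf : ⨆ μ : K, f.eigenspace μ = ⊤) (p k m : ℕ) [ExpChar K p]
    (hpow : f ^ (p ^ k * m) = 1) : f ^ m = 1 := by
  refine LinearMap.ext fun v ↦ Submodule.iSup_induction _ (motive := fun v ↦ (f ^ m) v = v)
    (hf ▸ Submodule.mem_top) (fun μ v hv ↦ ?_) (map_zero _) fun v w hv hw ↦ by rw [map_add, hv, hw]
  obtain rfl | hv0 := eq_or_ne v 0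
  · exact map_zero _
  have hvec : f.HasUnifEigenvector μ 1 v := ⟨hv, hv0⟩
  have hμ : μ ^ (p ^ k * m) • v = (1 : K) • v := by
    rw [← hvec.pow_apply, hpow, one_smul, one_apply]
  rw [hvec.pow_apply, (ExpChar.pow_prime_pow_mul_eq_one_iff p k m μ).mp
    (smul_left_injective K hv0 hμ), one_smul]

theorem not_ringChar_dvd_orderOf {f : End K V} (hf : ⨆ μ : K, f.eigenspace μ = ⊤)
    (hpos : 0 < orderOf f) : ¬ ringChar K ∣ orderOf f := by
  rintro ⟨m, hm⟩
  rcases CharP.char_is_prime_or_zero K (ringChar K) with hp | hp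
  · have : Fact (ringChar K).Prime := ⟨hp⟩
    have hm0 : 0 < m := Nat.pos_of_mul_pos_left (hm ▸ hpos)
    have hfm : f ^ m = 1 := pow_eq_one_of_pow_expChar_pow_mul_eq_one hf (ringChar K) 1 m
      (by rw [pow_one, ← hm, pow_orderOf_eq_one])
    have := orderOf_le_of_pow_eq_one hm0 hfm
    nlinarith [hp.two_le]
  · rw [hp, zero_mul] at hm
    exact hpos.ne' hm

end Module.End

/-- A pseudo-reflection (an invertible linear map of finite order `d > 1` of a
finite-dimensional `K`-vector space fixing a hyperplane pointwise) is diagonalizable — i.e.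
the eigenspaces of `s` span `V` — if and only if `d` is not divisible by the characteristic
of `K`. -/
theorem stmt3 {K : Type*} [Field K] {V : Type*} [AddCommGroup V] [Module K V]
    [FiniteDimensional K V] (s : V ≃ₗ[K] V) (d : ℕ) (hd : 1 < d) (hord : orderOf s = d)
    (H : Submodule K V) (hH : Module.finrank K H = Module.finrank K V - 1)
    (hfix : ∀ x ∈ H, s x = x) :
    (⨆ μ : K, Module.End.eigenspace (s : V →ₗ[K] V) μ) = ⊤ ↔ ¬ (ringChar K ∣ d) := by
  set f : End K V := (s : V →ₗ[K] V)
  have hf : orderOf f = d := (orderOf_injective LinearEquiv.automorphismGroup.toLinearMapMonoidHom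
    LinearEquiv.toLinearMap_injective s).trans hord
  have hf1 : f ≠ 1 := fun h ↦ by rw [h, orderOf_one] at hf; omega
  have hker : H ≤ LinearMap.ker (f - 1) := fun x hx ↦ by simp [f, hfix x hx]
  have hrank : finrank K (LinearMap.range (f - 1)) ≤ 1 := by
    have := LinearMap.finrank_range_add_finrank_le_of_le_ker hker
    omega
  obtain ⟨c, hc⟩ := Module.End.exists_mul_self_eq_smul_of_finrank_range_le_one hrank
  rw [← hf]
  refine ⟨fun h ↦ Module.End.not_ringChar_dvd_orderOf h (by omega), fun hchar ↦ ?_⟩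
  refine Module.End.iSup_eigenspace_eq_top_of_sub_one_mul_self_eq_smul hc fun hc0 ↦
    hchar (ringChar.dvd ?_)
  exact cast_orderOf_eq_zero_of_sq_sub_one_eq_zero (by rw [sq, hc, hc0, zero_smul]) hf1
end

section
/- Let M be a nondegenerate lattice and let α ∈ M be a primitive vector with B(α,α) = 2k for some nonzero integer k, such that k divides B(α,x) for every x ∈ M. Then the discriminant group D_M = Hom_ℤ(M,ℤ)/ι_M(M) is a finite group and |k| divides the order of D_M. -/
/-!
The quotient of `M^∨` by the image of the injective map `ι_M` between free `ℤ`-modules of equal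
rank has rank zero, hence is a finitely generated torsion group, hence finite.

For the divisibility, divide `B(α, ·)` by `k` to get `φ ∈ M^∨`. If `n φ = B(m, ·)`, then
`k m = n α` by nondegeneracy; primitivity of `α` forces `m = d α`, and pairing with `α`
(using `B(α, α) ≠ 0`) gives `n = k d`. So `k` divides the order of the class of `φ` in `D_M`,
which divides `|D_M|`.
-/

open Module

theorem finite_quotient_range_of_injective {M N : Type*} [AddCommGroup M] [AddCommGroup N]
    [Module.Finite ℤ N] (f : M →ₗ[ℤ] N) (hf : Function.Injective f)
    (hrank : finrank ℤ N ≤ finrank ℤ M) : Finite (N ⧸ LinearMap.range f) := by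
  apply Module.finite_of_fg_torsion
  rw [← Module.finrank_eq_zero_iff_isTorsion]
  have := (LinearMap.range f).finrank_quotient_add_finrank
  rw [LinearMap.finrank_range_of_inj hf] at this
  omega

theorem LinearMap.exists_smul_eq_of_forall_dvd {M : Type*} [AddCommGroup M] (f : M →ₗ[ℤ] ℤ)
    {k : ℤ} (hdvd : ∀ x, k ∣ f x) : ∃ g : M →ₗ[ℤ] ℤ, k • g = f := by
  refine ⟨{ toFun := fun x ↦ f x / k, map_add' := ?_, map_smul' := ?_ }, ?_⟩
  · intro x y
    simp only [map_add, Int.add_ediv_of_dvd_right (hdvd y)]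
  · intro n x
    simp [Int.mul_ediv_assoc n (hdvd x)]
  · ext x
    exact Int.mul_ediv_cancel' (hdvd x)

theorem LinearMap.BilinForm.dvd_of_smul_mem_range {M : Type*} [AddCommGroup M] (B : LinearMap.BilinForm ℤ M)
    (hB : Function.Injective B) {α : M}
    (hprim : ∀ (n : ℤ) (y : M ⧸ Submodule.span ℤ {α}), n • y = 0 → n = 0 ∨ y = 0)
    (hαα : B α α ≠ 0) {k : ℤ} (hk : k ≠ 0) {φ : M →ₗ[ℤ] ℤ} (hφ : k • φ = B α) {n : ℤ}
    (hn : n • φ ∈ LinearMap.range B) : k ∣ n := by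
  obtain ⟨m, hm⟩ := hn
  have hkm : k • m = n • α := hB (by rw [map_zsmul, map_zsmul, hm, ← hφ, smul_comm])
  obtain ⟨d, rfl⟩ : ∃ d : ℤ, d • α = m := by
    have : k • (Submodule.Quotient.mk m : M ⧸ Submodule.span ℤ {α}) = 0 := by
      rw [← Submodule.Quotient.mk_smul, Submodule.Quotient.mk_eq_zero, hkm]
      exact Submodule.smul_mem _ _ (Submodule.mem_span_singleton_self α)
    exact Submodule.mem_span_singleton.mp
      ((Submodule.Quotient.mk_eq_zero _).mp ((hprim k _ this).resolve_left hk))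
  have hpair : k * d * B α α = n * B α α := by
    simpa [smul_smul, mul_comm] using congrArg (fun x ↦ B x α) hkm
  exact ⟨d, (mul_right_cancel₀ hαα hpair).symm⟩

theorem stmt7_general {M : Type*} [AddCommGroup M] [Module ℤ M] [Module.Free ℤ M]
    [Module.Finite ℤ M] (B : LinearMap.BilinForm ℤ M)
    (hnondeg : Function.Injective B)
    (α : M)
    (hprim : ∀ (n : ℤ) (y : M ⧸ Submodule.span ℤ {α}), n • y = 0 → n = 0 ∨ y = 0)
    (k : ℤ) (hk : k ≠ 0) (hαα : B α α = 2 * k)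
    (hdiv : ∀ x, k ∣ B α x) :
    Finite ((M →ₗ[ℤ] ℤ) ⧸ LinearMap.range B) ∧
      k.natAbs ∣ Nat.card ((M →ₗ[ℤ] ℤ) ⧸ LinearMap.range B) := by
  -- `B` is linear for the binder `[Module ℤ M]`; replace it by the canonical `ℤ`-action.
  obtain rfl := Subsingleton.elim ‹Module ℤ M› (AddCommGroup.toIntModule M)
  have hrank : finrank ℤ (M →ₗ[ℤ] ℤ) = finrank ℤ M :=
    (Free.chooseBasis ℤ M).toDualEquiv.finrank_eq.symm
  have hfin := finite_quotient_range_of_injective B hnondeg hrank.le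
  refine ⟨hfin, ?_⟩
  obtain ⟨φ, hφ⟩ := (B α).exists_smul_eq_of_forall_dvd hdiv
  let q : (M →ₗ[ℤ] ℤ) ⧸ LinearMap.range B := Submodule.Quotient.mk φ
  have hq : ((addOrderOf q : ℤ) • φ) ∈ LinearMap.range B := by
    rw [← Submodule.Quotient.mk_eq_zero, Submodule.Quotient.mk_smul, natCast_zsmul]
    exact addOrderOf_nsmul_eq_zero q
  have hαα_ne : B α α ≠ 0 := hαα ▸ mul_ne_zero two_ne_zero hk
  have hk_dvd := B.dvd_of_smul_mem_range hnondeg hprim hαα_ne hk hφ hq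
  exact (Int.dvd_natCast.mp hk_dvd).trans (addOrderOf_dvd_natCard q)

/-- let `M` be a nondegenerate lattice and `α ∈ M` a primitive vector with
`B(α,α) = 2k`, `k ≠ 0`, such that `k` divides `B(α,x)` for every `x ∈ M`. Then the
discriminant group `D_M = Hom(M,ℤ)/ι_M(M)` is finite and `|k|` divides its order. -/
theorem stmt7 {M : Type*} [AddCommGroup M] [Module ℤ M] [Module.Free ℤ M]
    [Module.Finite ℤ M] (B : LinearMap.BilinForm ℤ M)
    (hsymm : ∀ x y, B x y = B y x)
    (hnondeg : Function.Injective B)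
    (α : M)
    (hprim : ∀ (n : ℤ) (y : M ⧸ Submodule.span ℤ {α}), n • y = 0 → n = 0 ∨ y = 0)
    (k : ℤ) (hk : k ≠ 0) (hαα : B α α = 2 * k)
    (hdiv : ∀ x, k ∣ B α x) :
    Finite ((M →ₗ[ℤ] ℤ) ⧸ LinearMap.range B) ∧
      k.natAbs ∣ Nat.card ((M →ₗ[ℤ] ℤ) ⧸ LinearMap.range B) :=
  stmt7_general B hnondeg α hprim k hk hαα hdiv
end

section
/- For all integers p, q, r ≥ 1, the determinant of the Gram matrix G(p,q,r) of the tree T_{p,q,r} equals pq + pr + qr − pqr. -/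
/-!
Deleting the central vertex of `T_{p,q,r}` leaves three paths, whose Gram matrices are the Cartan
matrices `A_{p-1}, A_{q-1}, A_{r-1}` of determinants `p, q, r`. The central vertex is joined to an
end vertex of each path, and the corresponding diagonal entry of `A_{m-1}⁻¹` is `(m-1)/m`. Taking
the Schur complement of the three paths,
`det G = pqr (2 - Σ (1 - 1/p)) = pqr (1/p + 1/q + 1/r - 1) = pq + pr + qr - pqr`.
-/

/-- The vertex type of the tree `T_{p,q,r}`: a central vertex together with three chains
having `p-1`, `q-1` and `r-1` further vertices respectively (so `T_{p,q,r}` has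
`p + q + r - 2` vertices when `p, q, r ≥ 1`). -/
abbrev TVertex (p q r : ℕ) : Type := Unit ⊕ (Fin (p - 1) ⊕ (Fin (q - 1) ⊕ Fin (r - 1)))

/-- Adjacency in the tree `T_{p,q,r}`: the central vertex is adjacent to the first vertex of
each chain, and consecutive vertices of a chain are adjacent. -/
def TAdj {p q r : ℕ} : TVertex p q r → TVertex p q r → Bool
  | Sum.inl _, Sum.inr (Sum.inl i) => i.val == 0
  | Sum.inl _, Sum.inr (Sum.inr (Sum.inl i)) => i.val == 0
  | Sum.inl _, Sum.inr (Sum.inr (Sum.inr i)) => i.val == 0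
  | Sum.inr (Sum.inl i), Sum.inl _ => i.val == 0
  | Sum.inr (Sum.inr (Sum.inl i)), Sum.inl _ => i.val == 0
  | Sum.inr (Sum.inr (Sum.inr i)), Sum.inl _ => i.val == 0
  | Sum.inr (Sum.inl i), Sum.inr (Sum.inl j) => (i.val + 1 == j.val) || (j.val + 1 == i.val)
  | Sum.inr (Sum.inr (Sum.inl i)), Sum.inr (Sum.inr (Sum.inl j)) =>
      (i.val + 1 == j.val) || (j.val + 1 == i.val)
  | Sum.inr (Sum.inr (Sum.inr i)), Sum.inr (Sum.inr (Sum.inr j)) =>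
      (i.val + 1 == j.val) || (j.val + 1 == i.val)
  | _, _ => false

/-- The Gram matrix `G(p,q,r)` of the tree `T_{p,q,r}`: diagonal entries `2`, entries `-1`
between adjacent vertices, and `0` otherwise. -/
def gramT (p q r : ℕ) : Matrix (TVertex p q r) (TVertex p q r) ℤ :=
  Matrix.of fun v w => if v = w then 2 else if TAdj v w then -1 else 0

open Matrix

section Schur

variable {ι n m R : Type*} [Fintype n] [DecidableEq n] [Fintype m] [DecidableEq m]

theorem det_fromBlocks_replicateRow_replicateCol [Unique ι] [DecidableEq ι] [CommRing R]
    (a : R) (u v : n → R) (D : Matrix n n R) (hD : IsUnit D.det) :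
    (fromBlocks (of fun _ _ : ι => a) (replicateRow ι u) (replicateCol ι v) D).det
      = D.det * (a - u ⬝ᵥ D⁻¹ *ᵥ v) := by
  let := D.invertibleOfIsUnitDet hD
  rw [det_fromBlocks₂₂, det_unique (n := ι), invOf_eq_nonsing_inv, ← replicateRow_vecMul]
  simp [dotProduct_mulVec]

theorem sumElim_dotProduct_inv_fromBlocks_mulVec [CommRing R] (A : Matrix m m R)
    (D : Matrix n n R) (h : IsUnit A ↔ IsUnit D) (u₁ v₁ : m → R) (u₂ v₂ : n → R) :
    Sum.elim u₁ u₂ ⬝ᵥ (fromBlocks A 0 0 D)⁻¹ *ᵥ Sum.elim v₁ v₂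
      = u₁ ⬝ᵥ A⁻¹ *ᵥ v₁ + u₂ ⬝ᵥ D⁻¹ *ᵥ v₂ := by
  rw [inv_fromBlocks_zero₂₁_of_isUnit_iff _ _ _ h]
  simp [fromBlocks_mulVec, sumElim_dotProduct_sumElim]

end Schur

namespace CartanMatrix

theorem A_submatrix_succ (n : ℕ) : (A (n + 1)).submatrix Fin.succ Fin.succ = A n := by
  ext i j
  simp [A, Fin.succ_inj]

theorem det_A_add_two (n : ℕ) : (A (n + 2)).det = 2 * (A (n + 1)).det - (A n).det := by
  have hminor : ((A (n + 2)).submatrix Fin.succ (Fin.succAbove 1)).det = -(A n).det := by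
    rw [det_succ_column_zero, Fin.sum_univ_succ, Fintype.sum_eq_zero _ fun i => by
      simp [A, Fin.succAbove, Fin.ext_iff]]
    have hA : ((A (n + 2)).submatrix Fin.succ (Fin.succAbove 1)).submatrix (Fin.succAbove 0)
        Fin.succ = A n := by
      ext i j
      simp [A, Fin.succAbove, Fin.ext_iff]
    rw [hA]
    simp [A, Fin.succAbove]
  rw [det_succ_row_zero, Fin.sum_univ_succ, Fin.sum_univ_succ, Fintype.sum_eq_zero _ fun j => by
    simp [A, Fin.ext_iff]]
  have h00 : A (n + 2) 0 0 = 2 := by simp [A]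
  have h01 : A (n + 2) 0 1 = -1 := by simp [A]
  simp only [Fin.succAbove_zero, A_submatrix_succ, Fin.succ_zero_eq_one, h00, h01, hminor,
    Fin.val_zero, Fin.val_one]
  ring

theorem det_A (n : ℕ) : (A n).det = n + 1 := by
  induction n using Nat.twoStepInduction with
  | zero => simp
  | one => simp [A]
  | more n ih₀ ih₁ => rw [det_A_add_two, ih₀, ih₁]; push_cast; ring

theorem det_A_map {R : Type*} [CommRing R] (n : ℕ) :
    ((A n).map (Int.cast : ℤ → R)).det = n + 1 := by
  rw [← Int.cast_det, det_A, Int.cast_add, Int.cast_natCast, Int.cast_one]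

theorem inv_A_map_zero_zero {K : Type*} [Field K] [CharZero K] (n : ℕ) :
    ((A (n + 1)).map (Int.cast : ℤ → K))⁻¹ 0 0 = (n + 1) / (n + 2) := by
  rw [inv_def, Matrix.smul_apply, adjugate_fin_succ_eq_det_submatrix, Fin.succAbove_zero,
    submatrix_map, A_submatrix_succ, det_A_map, det_A_map,
    Ring.inverse_eq_inv', Fin.val_zero, pow_zero, one_mul, smul_eq_mul]
  push_cast
  ring

end CartanMatrix

def chainLink (R : Type*) [Ring R] (n : ℕ) : Fin n → R := fun i => if (i : ℕ) = 0 then -1 else 0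

theorem chainLink_dotProduct_inv_A_mulVec {K : Type*} [Field K] [CharZero K] (n : ℕ) :
    chainLink K n ⬝ᵥ ((CartanMatrix.A n).map (Int.cast : ℤ → K))⁻¹ *ᵥ chainLink K n
      = n / (n + 1) := by
  cases n with
  | zero => simp
  | succ n =>
    have h : chainLink K (n + 1) = -Pi.single 0 1 := by
      ext i
      rcases Fin.eq_zero_or_eq_succ i with rfl | ⟨j, rfl⟩ <;> simp [chainLink]
    rw [h, mulVec_neg, neg_dotProduct, dotProduct_neg, neg_neg, mulVec_single_one,
      single_one_dotProduct, col_apply, CartanMatrix.inv_A_map_zero_zero]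
    push_cast
    ring

theorem gramT_map_eq_fromBlocks {R : Type*} [Ring R] (p q r : ℕ) :
    (gramT p q r).map (Int.cast : ℤ → R) =
      fromBlocks (of fun _ _ => 2)
        (replicateRow Unit (Sum.elim (chainLink R (p - 1))
          (Sum.elim (chainLink R (q - 1)) (chainLink R (r - 1)))))
        (replicateCol Unit (Sum.elim (chainLink R (p - 1))
          (Sum.elim (chainLink R (q - 1)) (chainLink R (r - 1)))))
        (fromBlocks ((CartanMatrix.A (p - 1)).map Int.cast) 0 0
          (fromBlocks ((CartanMatrix.A (q - 1)).map Int.cast) 0 0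
            ((CartanMatrix.A (r - 1)).map Int.cast))) := by
  ext v w
  rcases v with _ | (i | i | i) <;> rcases w with _ | (j | j | j) <;>
    simp only [map_apply, gramT, of_apply, TAdj, fromBlocks_apply₁₁, fromBlocks_apply₁₂,
      fromBlocks_apply₂₁, fromBlocks_apply₂₂, replicateRow_apply, replicateCol_apply,
      Sum.elim_inl, Sum.elim_inr, chainLink, CartanMatrix.A, Bool.or_eq_true, beq_iff_eq,
      Sum.inr.injEq, Sum.inl.injEq, Matrix.zero_apply] <;>
    split_ifs <;> simp_all

theorem det_gramT_cast {K : Type*} [Field K] [CharZero K] (p q r : ℕ) :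
    ((gramT (p + 1) (q + 1) (r + 1)).det : K) =
      (p + 1) * ((q + 1) * (r + 1)) * (2 - (p / (p + 1) + (q / (q + 1) + r / (r + 1)))) := by
  have hA (n : ℕ) : IsUnit ((CartanMatrix.A n).map (Int.cast : ℤ → K)) := by
    rw [isUnit_iff_isUnit_det, CartanMatrix.det_A_map]
    exact isUnit_iff_ne_zero.2 (Nat.cast_add_one_ne_zero n)
  have hqr := isUnit_fromBlocks_zero₂₁ (B := 0).2 ⟨hA q, hA r⟩
  rw [Int.cast_det, gramT_map_eq_fromBlocks, det_fromBlocks_replicateRow_replicateCol,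
    det_fromBlocks_zero₂₁, det_fromBlocks_zero₂₁, CartanMatrix.det_A_map, CartanMatrix.det_A_map,
    CartanMatrix.det_A_map, sumElim_dotProduct_inv_fromBlocks_mulVec,
    sumElim_dotProduct_inv_fromBlocks_mulVec, chainLink_dotProduct_inv_A_mulVec,
    chainLink_dotProduct_inv_A_mulVec, chainLink_dotProduct_inv_A_mulVec]
  · simp only [Nat.add_sub_cancel]
  · exact iff_of_true (hA q) (hA r)
  · exact iff_of_true (hA p) hqr
  · exact (isUnit_iff_isUnit_det _).1 (isUnit_fromBlocks_zero₂₁.2 ⟨hA p, hqr⟩)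

/-- for all `p, q, r ≥ 1` the determinant of the Gram matrix of `T_{p,q,r}`
equals `pq + pr + qr - pqr`. -/
theorem stmt8 (p q r : ℕ) (hp : 1 ≤ p) (hq : 1 ≤ q) (hr : 1 ≤ r) :
    (gramT p q r).det =
      (p : ℤ) * q + (p : ℤ) * r + (q : ℤ) * r - (p : ℤ) * q * r := by
  obtain ⟨a, rfl⟩ := Nat.exists_eq_add_of_le' hp
  obtain ⟨b, rfl⟩ := Nat.exists_eq_add_of_le' hq
  obtain ⟨c, rfl⟩ := Nat.exists_eq_add_of_le' hr
  apply Int.cast_injective (α := ℚ)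
  rw [det_gramT_cast]
  push_cast
  field_simp
  ring
end

section
/- Let p ≤ q ≤ r be integers with p ≥ 1. The real symmetric matrix G(p,q,r) is positive definite if and only if p = 1, or (p,q) = (2,2), or (p,q,r) is one of (2,3,3), (2,3,4), (2,3,5). -/
open Finset Matrix

namespace Matrix

variable {n : Type*} [Fintype n]

theorem posDef_of_nonpos_of_mulVec_pos {A : Matrix n n ℝ} (hA : A.IsHermitian)
    (hoff : ∀ i j, i ≠ j → A i j ≤ 0) {c : n → ℝ} (hc : ∀ i, 0 < c i)
    (hAc : ∀ i, 0 < (A *ᵥ c) i) : A.PosDef := by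
  refine .of_dotProduct_mulVec_pos hA fun x hx => ?_
  set y : n → ℝ := fun i => x i / c i
  have hx_eq : ∀ i, x i = c i * y i := fun i => (mul_div_cancel₀ _ (hc i).ne').symm
  obtain ⟨k, hk⟩ : ∃ k, y k ≠ 0 := by
    by_contra! h
    exact hx (funext fun i => by simp [hx_eq i, h i])
  -- `2 xᵢ xⱼ = cᵢ cⱼ (yᵢ² + yⱼ² - (yᵢ - yⱼ)²)`
  have hquad : 2 * (star x ⬝ᵥ A *ᵥ x) = ∑ i, ∑ j, A i j * (c i * c j * y i ^ 2)
      + ∑ i, ∑ j, A i j * (c i * c j * y j ^ 2)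
      - ∑ i, ∑ j, A i j * (c i * c j * (y i - y j) ^ 2) := by
    simp only [dotProduct, mulVec, star_trivial, mul_sum, ← sum_sub_distrib, ← sum_add_distrib]
    refine sum_congr rfl fun i _ => sum_congr rfl fun j _ => ?_
    rw [hx_eq i, hx_eq j]; ring
  have hswap : ∑ i, ∑ j, A i j * (c i * c j * y j ^ 2)
      = ∑ i, ∑ j, A i j * (c i * c j * y i ^ 2) := by
    rw [sum_comm]
    refine sum_congr rfl fun i _ => sum_congr rfl fun j _ => ?_
    rw [show A j i = A i j by simpa using congrFun₂ hA.eq i j]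
    ring
  have hdiag :
      ∑ i, ∑ j, A i j * (c i * c j * y i ^ 2) = ∑ i, c i * y i ^ 2 * (A *ᵥ c) i := by
    simp only [mulVec, dotProduct, mul_sum]
    exact sum_congr rfl fun i _ => sum_congr rfl fun j _ => by ring
  have hdefect : ∑ i, ∑ j, A i j * (c i * c j * (y i - y j) ^ 2) ≤ 0 :=
    sum_nonpos fun i _ => sum_nonpos fun j _ => by
      rcases eq_or_ne i j with rfl | hij
      · simp
      · exact mul_nonpos_of_nonpos_of_nonneg (hoff i j hij)
          (mul_nonneg (mul_pos (hc i) (hc j)).le (sq_nonneg _))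
  have hpos : 0 < ∑ i, c i * y i ^ 2 * (A *ᵥ c) i :=
    sum_pos' (fun i _ => by have := hc i; have := hAc i; positivity)
      ⟨k, mem_univ k, by have := hc k; have := hAc k; positivity⟩
  rw [hswap, hdiag] at hquad
  linarith

theorem not_posDef_of_nonneg_of_mulVec_nonpos {A : Matrix n n ℝ} {x : n → ℝ} (hx : x ≠ 0)
    (hx_nonneg : ∀ i, 0 ≤ x i) (hAx : ∀ i, (A *ᵥ x) i ≤ 0) : ¬A.PosDef := fun hA =>
  (hA.dotProduct_mulVec_pos hx).not_ge <|
    sum_nonpos fun i _ => mul_nonpos_of_nonneg_of_nonpos (by simpa using hx_nonneg i) (hAx i)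

end Matrix

section pathSums

variable {M : Type*} [AddCommMonoid M] {n : ℕ} (φ : ℕ → M)

theorem sum_fin_ite_val_eq_zero (hφ : φ (n + 1) = 0) :
    (∑ i : Fin n, if (i : ℕ) = 0 then φ (i + 1) else 0) = φ 1 := by
  cases n with
  | zero => simp [hφ]
  | succ n => simp

theorem sum_fin_ite_adj (hφ : φ (n + 1) = 0) (i : Fin n) :
    (∑ j : Fin n, if (i : ℕ) + 1 = j ∨ (j : ℕ) + 1 = i then φ (j + 1) else 0)
      = φ (i + 2) + if (i : ℕ) = 0 then 0 else φ i := by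
  obtain ⟨i, hi⟩ := i
  have hsplit : ∀ j : ℕ, (if i + 1 = j ∨ j + 1 = i then φ (j + 1) else 0)
      = (if i + 1 = j then φ (j + 1) else 0) + if j + 1 = i then φ (j + 1) else 0 := by
    intro j
    split_ifs <;> first | omega | simp
  rw [Fin.sum_univ_eq_sum_range (fun j => if i + 1 = j ∨ j + 1 = i then φ (j + 1) else 0),
    sum_congr rfl fun j _ => hsplit j, sum_add_distrib, sum_ite_eq]
  congr 1
  · split_ifs with h
    · rfl
    · rw [show i + 2 = n + 1 by simp at h; omega, hφ]
  · rcases i with _ | k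
    · simp
    · simp [sum_ite_eq', show k < n by omega]

end pathSums

abbrev gramReal (p q r : ℕ) : Matrix (TVertex p q r) (TVertex p q r) ℝ :=
  (gramT p q r).map (Int.cast : ℤ → ℝ)

section gram

variable {p q r : ℕ}

theorem TAdj_comm (v w : TVertex p q r) : TAdj v w = TAdj w v := by
  rcases v with _ | i | i | i <;> rcases w with _ | j | j | j <;> simp [TAdj, Bool.or_comm]

theorem TAdj_self (v : TVertex p q r) : TAdj v v = false := by
  rcases v with _ | i | i | i <;> simp [TAdj]

theorem gramReal_isHermitian : (gramReal p q r).IsHermitian := by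
  ext v w
  simp only [gramReal, conjTranspose_apply, map_apply, gramT, of_apply, star_trivial, TAdj_comm v w,
    eq_comm]

theorem gramReal_apply_nonpos {v w : TVertex p q r} (h : v ≠ w) : gramReal p q r v w ≤ 0 := by
  simp only [gramReal, map_apply, gramT, of_apply, if_neg h]
  split_ifs <;> norm_num

theorem gramReal_mulVec_apply (x : TVertex p q r → ℝ) (v : TVertex p q r) :
    (gramReal p q r *ᵥ x) v = 2 * x v - ∑ w, if TAdj v w then x w else 0 := by
  have hentry : ∀ w, gramReal p q r v w * x w
      = (if v = w then 2 * x w else 0) - if TAdj v w then x w else 0 := by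
    intro w
    rcases eq_or_ne v w with rfl | h
    · simp [gramT, TAdj_self]
    · simp only [gramReal, map_apply, gramT, of_apply, if_neg h]
      split_ifs <;> simp
  simp only [mulVec, dotProduct, hentry, sum_sub_distrib, sum_ite_eq, mem_univ, if_true]

/-- The vertex `i : Fin (p - 1)` of the first arm is at distance `i + 1` from the centre; it gets
`f (i + 1)`, and similarly for the other arms with `g` and `h`. The centre gets `f 0`. -/
def ofArms (f g h : ℕ → ℝ) : TVertex p q r → ℝ
  | Sum.inl _ => f 0
  | Sum.inr (Sum.inl i) => f (i + 1)
  | Sum.inr (Sum.inr (Sum.inl i)) => g (i + 1)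
  | Sum.inr (Sum.inr (Sum.inr i)) => h (i + 1)

variable {f g h : ℕ → ℝ}

theorem gramReal_mulVec_ofArms_center (hp : 1 ≤ p) (hq : 1 ≤ q) (hr : 1 ≤ r) (hf : f p = 0)
    (hg : g q = 0) (hh : h r = 0) :
    (gramReal p q r *ᵥ ofArms f g h) (Sum.inl ()) = 2 * f 0 - f 1 - g 1 - h 1 := by
  rw [gramReal_mulVec_apply]
  simp only [Fintype.sum_sum_type, TAdj, ofArms, beq_iff_eq]
  rw [sum_fin_ite_val_eq_zero f (by rwa [Nat.sub_add_cancel hp]),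
    sum_fin_ite_val_eq_zero g (by rwa [Nat.sub_add_cancel hq]),
    sum_fin_ite_val_eq_zero h (by rwa [Nat.sub_add_cancel hr])]
  simp only [univ_unique, PUnit.default_eq_unit, Bool.false_eq_true, ↓reduceIte, sum_const_zero,
    zero_add]
  ring

theorem gramReal_mulVec_ofArms_arm₁ (hp : 1 ≤ p) (hf : f p = 0) (i : Fin (p - 1)) :
    (gramReal p q r *ᵥ ofArms f g h) (Sum.inr (Sum.inl i)) = 2 * f (i + 1) - f i - f (i + 2) := by
  rw [gramReal_mulVec_apply]
  simp only [ofArms, TAdj, Fintype.sum_sum_type, univ_unique, PUnit.default_eq_unit, beq_iff_eq,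
    sum_ite_irrel, sum_const, card_singleton, one_smul, Bool.false_eq_true, ↓reduceIte,
    Bool.or_eq_true, sum_fin_ite_adj f (show f (p - 1 + 1) = 0 by rwa [Nat.sub_add_cancel hp])]
  split_ifs with hi
  · rw [hi]; ring
  · ring

theorem gramReal_mulVec_ofArms_arm₂ (hq : 1 ≤ q) (hg : g q = 0) (hg₀ : g 0 = f 0)
    (i : Fin (q - 1)) :
    (gramReal p q r *ᵥ ofArms f g h) (Sum.inr (Sum.inr (Sum.inl i)))
      = 2 * g (i + 1) - g i - g (i + 2) := by
  rw [gramReal_mulVec_apply]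
  simp only [ofArms, TAdj, Fintype.sum_sum_type, univ_unique, PUnit.default_eq_unit, beq_iff_eq,
    sum_ite_irrel, sum_const, card_singleton, one_smul, Bool.false_eq_true, ↓reduceIte,
    Bool.or_eq_true, sum_fin_ite_adj g (show g (q - 1 + 1) = 0 by rwa [Nat.sub_add_cancel hq])]
  split_ifs with hi
  · rw [hi, hg₀]; ring
  · ring

theorem gramReal_mulVec_ofArms_arm₃ (hr : 1 ≤ r) (hh : h r = 0) (hh₀ : h 0 = f 0)
    (i : Fin (r - 1)) :
    (gramReal p q r *ᵥ ofArms f g h) (Sum.inr (Sum.inr (Sum.inr i)))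
      = 2 * h (i + 1) - h i - h (i + 2) := by
  rw [gramReal_mulVec_apply]
  simp only [ofArms, TAdj, Fintype.sum_sum_type, univ_unique, PUnit.default_eq_unit, beq_iff_eq,
    sum_ite_irrel, sum_const, card_singleton, one_smul, Bool.false_eq_true, ↓reduceIte,
    Bool.or_eq_true, sum_fin_ite_adj h (show h (r - 1 + 1) = 0 by rwa [Nat.sub_add_cancel hr])]
  split_ifs with hi
  · rw [hi, hh₀]; ring
  · ring

end gram

section criterion

variable {p q r : ℕ}

theorem gramReal_posDef_of_lt (hp : 1 ≤ p) (hq : 1 ≤ q) (hr : 1 ≤ r)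
    (hlt : p * q * r < p * q + q * r + r * p) : (gramReal p q r).PosDef := by
  set N : ℝ := 3 * p * q * r
  set f : ℕ → ℝ := fun j => q * r * ((p - j) * (N + j))
  set g : ℕ → ℝ := fun j => p * r * ((q - j) * (N + j))
  set h : ℕ → ℝ := fun j => p * q * ((r - j) * (N + j))
  have hinside : ∀ {m : ℕ} (i : Fin (m - 1)), (0 : ℝ) < m - (i + 1 : ℕ) := fun i => by
    rw [sub_pos]; exact_mod_cast (by omega : (i : ℕ) + 1 < _)
  have hf : f p = 0 := by simp [f]
  have hg : g q = 0 := by simp [g]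
  have hh : h r = 0 := by simp [h]
  refine posDef_of_nonpos_of_mulVec_pos gramReal_isHermitian (fun _ _ => gramReal_apply_nonpos)
    (c := ofArms f g h) ?_ ?_
  · rintro (_ | i | i | i) <;> simp only [ofArms, f, g, h]
    · simp only [CharP.cast_eq_zero, sub_zero, add_zero]; positivity
    · exact mul_pos (by positivity) (mul_pos (hinside i) (by positivity))
    · exact mul_pos (by positivity) (mul_pos (hinside i) (by positivity))
    · exact mul_pos (by positivity) (mul_pos (hinside i) (by positivity))
  · rintro (_ | i | i | i)
    · rw [gramReal_mulVec_ofArms_center hp hq hr hf hg hh]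
      have hlt' : (p * q * r + 1 : ℝ) ≤ p * q + q * r + r * p := by exact_mod_cast hlt
      have hcenter : 2 * f 0 - f 1 - g 1 - h 1 =
          3 * (p * q * r) * (p * q + q * r + r * p - p * q * r - 1) + (p * q + q * r + r * p) := by
        simp only [f, g, h, N]; push_cast; ring
      rw [hcenter]
      exact add_pos_of_nonneg_of_pos (mul_nonneg (by positivity) (by linarith)) (by positivity)
    · rw [gramReal_mulVec_ofArms_arm₁ hp hf]
      simp only [f]; push_cast; ring_nf; positivity
    · rw [gramReal_mulVec_ofArms_arm₂ hq hg (by simp only [g, f]; push_cast; ring)]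
      simp only [g]; push_cast; ring_nf; positivity
    · rw [gramReal_mulVec_ofArms_arm₃ hr hh (by simp only [h, f]; push_cast; ring)]
      simp only [h]; push_cast; ring_nf; positivity

theorem gramReal_not_posDef_of_le (hp : 1 ≤ p) (hq : 1 ≤ q) (hr : 1 ≤ r)
    (hle : p * q + q * r + r * p ≤ p * q * r) : ¬(gramReal p q r).PosDef := by
  set f : ℕ → ℝ := fun j => q * r * (p - j : ℕ)
  set g : ℕ → ℝ := fun j => p * r * (q - j : ℕ)
  set h : ℕ → ℝ := fun j => p * q * (r - j : ℕ)
  have hconvex : ∀ m j : ℕ,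
      2 * ((m - (j + 1) : ℕ) : ℝ) ≤ (m - j : ℕ) + (m - (j + 2) : ℕ) :=
    fun m j => by exact_mod_cast (by omega : 2 * (m - (j + 1)) ≤ (m - j) + (m - (j + 2)))
  have hf : f p = 0 := by simp [f]
  have hg : g q = 0 := by simp [g]
  have hh : h r = 0 := by simp [h]
  refine not_posDef_of_nonneg_of_mulVec_nonpos (x := ofArms f g h) ?_ ?_ ?_
  · refine Function.ne_iff.mpr ⟨Sum.inl (), ?_⟩
    simp only [ofArms, f, Nat.sub_zero, Pi.zero_apply]
    positivity
  · rintro (_ | i | i | i) <;> simp only [ofArms, f, g, h] <;> positivity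
  · rintro (_ | i | i | i)
    · rw [gramReal_mulVec_ofArms_center hp hq hr hf hg hh]
      have hle' : (p * q + q * r + r * p : ℝ) ≤ p * q * r := by exact_mod_cast hle
      simp only [f, g, h, Nat.sub_zero]
      push_cast [Nat.cast_sub hp, Nat.cast_sub hq, Nat.cast_sub hr]
      linarith
    · rw [gramReal_mulVec_ofArms_arm₁ hp hf]
      simp only [f]
      linarith [mul_le_mul_of_nonneg_left (hconvex p i) (by positivity : (0 : ℝ) ≤ q * r)]
    · rw [gramReal_mulVec_ofArms_arm₂ hq hg (by simp only [g, f, Nat.sub_zero]; ring)]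
      simp only [g]
      linarith [mul_le_mul_of_nonneg_left (hconvex q i) (by positivity : (0 : ℝ) ≤ p * r)]
    · rw [gramReal_mulVec_ofArms_arm₃ hr hh (by simp only [h, f, Nat.sub_zero]; ring)]
      simp only [h]
      linarith [mul_le_mul_of_nonneg_left (hconvex r i) (by positivity : (0 : ℝ) ≤ p * q)]

theorem gramReal_posDef_iff (hp : 1 ≤ p) (hq : 1 ≤ q) (hr : 1 ≤ r) :
    (gramReal p q r).PosDef ↔ p * q * r < p * q + q * r + r * p :=
  ⟨fun hpos => not_le.mp fun hle => gramReal_not_posDef_of_le hp hq hr hle hpos,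
    gramReal_posDef_of_lt hp hq hr⟩

end criterion

theorem mul_mul_lt_add_iff {p q r : ℕ} (hp : 1 ≤ p) (hpq : p ≤ q) (hqr : q ≤ r) :
    p * q * r < p * q + q * r + r * p ↔
      p = 1 ∨ (p = 2 ∧ q = 2) ∨
        (p, q, r) = (2, 3, 3) ∨ (p, q, r) = (2, 3, 4) ∨ (p, q, r) = (2, 3, 5) := by
  simp only [Prod.mk.injEq]
  constructor
  · intro h
    obtain rfl | rfl | hp3 : p = 1 ∨ p = 2 ∨ 3 ≤ p := by omega
    · exact .inl rfl
    · obtain rfl | rfl | hq4 : q = 2 ∨ q = 3 ∨ 4 ≤ q := by omega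
      · exact .inr (.inl ⟨rfl, rfl⟩)
      · have : r < 6 := by omega
        interval_cases r <;> simp
      · nlinarith [Nat.mul_le_mul hq4 (hq4.trans hqr)]
    · nlinarith [Nat.mul_le_mul_right r (Nat.mul_le_mul_right q hp3), Nat.mul_le_mul_right r hpq,
        Nat.mul_le_mul_left r (hpq.trans hqr)]
  · rintro (rfl | ⟨rfl, rfl⟩ | ⟨rfl, rfl, rfl⟩ | ⟨rfl, rfl, rfl⟩ | ⟨rfl, rfl, rfl⟩)
    all_goals nlinarith

/-- for `1 ≤ p ≤ q ≤ r`, the real symmetric matrix `G(p,q,r)` is positive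
definite if and only if `p = 1`, or `(p,q) = (2,2)`, or `(p,q,r)` is one of `(2,3,3)`,
`(2,3,4)`, `(2,3,5)`. -/
theorem stmt10 (p q r : ℕ) (hp : 1 ≤ p) (hpq : p ≤ q) (hqr : q ≤ r) :
    ((gramT p q r).map (Int.cast : ℤ → ℝ)).PosDef ↔
      (p = 1 ∨ (p = 2 ∧ q = 2) ∨
        (p, q, r) = (2, 3, 3) ∨ (p, q, r) = (2, 3, 4) ∨ (p, q, r) = (2, 3, 5)) :=
  (gramReal_posDef_iff hp (hp.trans hpq) (hp.trans (hpq.trans hqr))).trans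
    (mul_mul_lt_add_iff hp hpq hqr)
end

section
/- Let p, q, r ≥ 1 be integers with 1/p + 1/q + 1/r < 1, and set n = p + q + r − 2. Then the real symmetric matrix G(p,q,r) is nondegenerate of signature (n−1, 1): the associated real quadratic form is equivalent to x₁² + ⋯ + x_{n−1}² − x_n², i.e., G(p,q,r) has exactly n−1 positive eigenvalues and exactly one negative eigenvalue (counted with multiplicity). -/
namespace St12
variable (p q r : ℕ)
def ctr : TVertex p q r := Sum.inl ()
def cP (i : Fin (p-1)) : TVertex p q r := Sum.inr (Sum.inl i)
def cQ (i : Fin (q-1)) : TVertex p q r := Sum.inr (Sum.inr (Sum.inl i))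
def cR (i : Fin (r-1)) : TVertex p q r := Sum.inr (Sum.inr (Sum.inr i))
def G : Matrix (TVertex p q r) (TVertex p q r) ℝ := (gramT p q r).map (Int.cast : ℤ → ℝ)

lemma G_apply (v w : TVertex p q r) :
    G p q r v w = if v = w then 2 else if TAdj v w then -1 else 0 := by
  simp only [G, gramT, Matrix.map_apply, Matrix.of_apply]
  split_ifs <;> norm_num

variable {p q r}

def xP (x : TVertex p q r → ℝ) (j : ℕ) : ℝ := if h : j < p-1 then x (cP p q r ⟨j,h⟩) else 0
def xQ (x : TVertex p q r → ℝ) (j : ℕ) : ℝ := if h : j < q-1 then x (cQ p q r ⟨j,h⟩) else 0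
def xR (x : TVertex p q r → ℝ) (j : ℕ) : ℝ := if h : j < r-1 then x (cR p q r ⟨j,h⟩) else 0

lemma sum_ind {m : ℕ} (c : Fin m → ℝ) (k : ℕ) :
    ∑ i : Fin m, (if i.val = k then c i else 0) = if h : k < m then c ⟨k,h⟩ else 0 := by
  split_ifs with h
  · rw [Finset.sum_eq_single ⟨k,h⟩]
    · simp
    · intro b _ hb
      rw [if_neg]
      intro hc; exact hb (Fin.ext hc)
    · simp
  · apply Finset.sum_eq_zero
    intro i _
    rw [if_neg]
    omega

lemma dot_expand (x z : TVertex p q r → ℝ) :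
    dotProduct x z = x (ctr p q r) * z (ctr p q r)
      + ∑ i, x (cP p q r i) * z (cP p q r i)
      + ∑ i, x (cQ p q r i) * z (cQ p q r i)
      + ∑ i, x (cR p q r i) * z (cR p q r i) := by
  simp [dotProduct, Fintype.sum_sum_type, ctr, cP, cQ, cR, add_assoc]

lemma row_ctr (x : TVertex p q r → ℝ) :
    (G p q r).mulVec x (ctr p q r) = 2 * x (ctr p q r) - xP x 0 - xQ x 0 - xR x 0 := by
  simp only [Matrix.mulVec, dotProduct, Fintype.sum_sum_type, Fintype.sum_unique]
  have e0 : G p q r (ctr p q r) (ctr p q r) = 2 := by rw [G_apply]; simp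
  have eP : ∀ i, G p q r (ctr p q r) (cP p q r i) * x (cP p q r i)
      = if i.val = 0 then x (cP p q r i) * (-1) else 0 := by
    intro i; rw [G_apply]; simp [ctr, cP, TAdj]
  have eQ : ∀ i, G p q r (ctr p q r) (cQ p q r i) * x (cQ p q r i)
      = if i.val = 0 then x (cQ p q r i) * (-1) else 0 := by
    intro i; rw [G_apply]; simp [ctr, cQ, TAdj]
  have eR : ∀ i, G p q r (ctr p q r) (cR p q r i) * x (cR p q r i)
      = if i.val = 0 then x (cR p q r i) * (-1) else 0 := by
    intro i; rw [G_apply]; simp [ctr, cR, TAdj]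
  show G p q r (ctr p q r) (ctr p q r) * x (ctr p q r)
      + (∑ i, G p q r (ctr p q r) (cP p q r i) * x (cP p q r i)
      + (∑ i, G p q r (ctr p q r) (cQ p q r i) * x (cQ p q r i)
      + ∑ i, G p q r (ctr p q r) (cR p q r i) * x (cR p q r i))) = _
  rw [e0, Finset.sum_congr rfl (fun i _ => eP i), Finset.sum_congr rfl (fun i _ => eQ i),
    Finset.sum_congr rfl (fun i _ => eR i), sum_ind, sum_ind, sum_ind]
  simp only [xP, xQ, xR]
  split_ifs <;> ring

lemma row_P (x : TVertex p q r → ℝ) (i : Fin (p-1)) :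
    (G p q r).mulVec x (cP p q r i) = 2 * x (cP p q r i)
      - (if i.val = 0 then x (ctr p q r) else xP x (i.val - 1)) - xP x (i.val + 1) := by
  simp only [Matrix.mulVec, dotProduct, Fintype.sum_sum_type, Fintype.sum_unique]
  have e0 : G p q r (cP p q r i) (ctr p q r) * x (ctr p q r)
      = if i.val = 0 then -x (ctr p q r) else 0 := by
    rw [G_apply]; simp [ctr, cP, TAdj]
  have eP : ∀ j, G p q r (cP p q r i) (cP p q r j) * x (cP p q r j)
      = (if j.val = i.val then 2 * x (cP p q r j) else 0)
      + (if j.val = i.val + 1 then -x (cP p q r j) else 0)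
      + (if i.val = 0 then 0 else if j.val = i.val - 1 then -x (cP p q r j) else 0) := by
    intro j; rw [G_apply]
    simp only [cP, Sum.inr.injEq, Sum.inl.injEq, Fin.ext_iff, TAdj, Bool.or_eq_true,
      beq_iff_eq]
    split_ifs <;> first | ring1 | (exfalso; omega)
  have eQ : ∀ j, G p q r (cP p q r i) (cQ p q r j) * x (cQ p q r j) = 0 := by
    intro j; rw [G_apply]; simp [cP, cQ, TAdj]
  have eR : ∀ j, G p q r (cP p q r i) (cR p q r j) * x (cR p q r j) = 0 := by
    intro j; rw [G_apply]; simp [cP, cR, TAdj]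
  show G p q r (cP p q r i) (ctr p q r) * x (ctr p q r)
      + (∑ j, G p q r (cP p q r i) (cP p q r j) * x (cP p q r j)
      + (∑ j, G p q r (cP p q r i) (cQ p q r j) * x (cQ p q r j)
      + ∑ j, G p q r (cP p q r i) (cR p q r j) * x (cR p q r j))) = _
  rw [e0, Finset.sum_congr rfl (fun j _ => eP j), Finset.sum_congr rfl (fun j _ => eQ j),
    Finset.sum_congr rfl (fun j _ => eR j), Finset.sum_const_zero, Finset.sum_const_zero,
    Finset.sum_add_distrib, Finset.sum_add_distrib, sum_ind, sum_ind]
  have eC : (∑ j : Fin (p-1), if i.val = 0 then 0 else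
      if j.val = i.val - 1 then -x (cP p q r j) else 0)
      = if i.val = 0 then 0 else -xP x (i.val - 1) := by
    split_ifs with h0
    · simp
    · rw [sum_ind (fun j => -x (cP p q r j)) (i.val - 1)]
      simp only [xP]; split_ifs <;> simp
  rw [eC]
  have eA : (if h : i.val < p-1 then 2 * x (cP p q r ⟨i.val, h⟩) else 0)
      = 2 * x (cP p q r i) := by rw [dif_pos i.isLt]
  have eB : (if h : i.val + 1 < p-1 then -x (cP p q r ⟨i.val + 1, h⟩) else 0)
      = -xP x (i.val + 1) := by
    simp only [xP]; split_ifs <;> simp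
  rw [eA, eB]
  split_ifs <;> ring


lemma row_Q (x : TVertex p q r → ℝ) (i : Fin (q-1)) :
    (G p q r).mulVec x (cQ p q r i) = 2 * x (cQ p q r i)
      - (if i.val = 0 then x (ctr p q r) else xQ x (i.val - 1)) - xQ x (i.val + 1) := by
  simp only [Matrix.mulVec, dotProduct, Fintype.sum_sum_type, Fintype.sum_unique]
  have e0 : G p q r (cQ p q r i) (ctr p q r) * x (ctr p q r)
      = if i.val = 0 then -x (ctr p q r) else 0 := by
    rw [G_apply]; simp [ctr, cQ, TAdj]
  have eMain : ∀ j, G p q r (cQ p q r i) (cQ p q r j) * x (cQ p q r j)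
      = (if j.val = i.val then 2 * x (cQ p q r j) else 0)
      + (if j.val = i.val + 1 then -x (cQ p q r j) else 0)
      + (if i.val = 0 then 0 else if j.val = i.val - 1 then -x (cQ p q r j) else 0) := by
    intro j; rw [G_apply]
    simp only [cQ, Sum.inr.injEq, Sum.inl.injEq, Fin.ext_iff, TAdj, Bool.or_eq_true,
      beq_iff_eq]
    split_ifs <;> first | ring1 | (exfalso; omega)
  have eO1 : ∀ j, G p q r (cQ p q r i) (cP p q r j) * x (cP p q r j) = 0 := by
    intro j; rw [G_apply]; simp [cQ, cP, TAdj]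
  have eO2 : ∀ j, G p q r (cQ p q r i) (cR p q r j) * x (cR p q r j) = 0 := by
    intro j; rw [G_apply]; simp [cQ, cR, TAdj]
  show G p q r (cQ p q r i) (ctr p q r) * x (ctr p q r)
      + (∑ j, G p q r (cQ p q r i) (cP p q r j) * x (cP p q r j)
      + (∑ j, G p q r (cQ p q r i) (cQ p q r j) * x (cQ p q r j)
      + ∑ j, G p q r (cQ p q r i) (cR p q r j) * x (cR p q r j))) = _
  rw [e0, Finset.sum_congr rfl (fun j _ => eMain j), Finset.sum_congr rfl (fun j _ => eO1 j),
    Finset.sum_congr rfl (fun j _ => eO2 j), Finset.sum_const_zero, Finset.sum_const_zero,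
    Finset.sum_add_distrib, Finset.sum_add_distrib, sum_ind, sum_ind]
  have eC : (∑ j : Fin (q-1), if i.val = 0 then 0 else
      if j.val = i.val - 1 then -x (cQ p q r j) else 0)
      = if i.val = 0 then 0 else -xQ x (i.val - 1) := by
    split_ifs with h0
    · simp
    · rw [sum_ind (fun j => -x (cQ p q r j)) (i.val - 1)]
      simp only [xQ]; split_ifs <;> simp
  rw [eC]
  have eA : (if h : i.val < q-1 then 2 * x (cQ p q r ⟨i.val, h⟩) else 0)
      = 2 * x (cQ p q r i) := by rw [dif_pos i.isLt]
  have eB : (if h : i.val + 1 < q-1 then -x (cQ p q r ⟨i.val + 1, h⟩) else 0)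
      = -xQ x (i.val + 1) := by
    simp only [xQ]; split_ifs <;> simp
  rw [eA, eB]
  split_ifs <;> ring

lemma row_R (x : TVertex p q r → ℝ) (i : Fin (r-1)) :
    (G p q r).mulVec x (cR p q r i) = 2 * x (cR p q r i)
      - (if i.val = 0 then x (ctr p q r) else xR x (i.val - 1)) - xR x (i.val + 1) := by
  simp only [Matrix.mulVec, dotProduct, Fintype.sum_sum_type, Fintype.sum_unique]
  have e0 : G p q r (cR p q r i) (ctr p q r) * x (ctr p q r)
      = if i.val = 0 then -x (ctr p q r) else 0 := by
    rw [G_apply]; simp [ctr, cR, TAdj]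
  have eMain : ∀ j, G p q r (cR p q r i) (cR p q r j) * x (cR p q r j)
      = (if j.val = i.val then 2 * x (cR p q r j) else 0)
      + (if j.val = i.val + 1 then -x (cR p q r j) else 0)
      + (if i.val = 0 then 0 else if j.val = i.val - 1 then -x (cR p q r j) else 0) := by
    intro j; rw [G_apply]
    simp only [cR, Sum.inr.injEq, Sum.inl.injEq, Fin.ext_iff, TAdj, Bool.or_eq_true,
      beq_iff_eq]
    split_ifs <;> first | ring1 | (exfalso; omega)
  have eO1 : ∀ j, G p q r (cR p q r i) (cP p q r j) * x (cP p q r j) = 0 := by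
    intro j; rw [G_apply]; simp [cR, cP, TAdj]
  have eO2 : ∀ j, G p q r (cR p q r i) (cQ p q r j) * x (cQ p q r j) = 0 := by
    intro j; rw [G_apply]; simp [cR, cQ, TAdj]
  show G p q r (cR p q r i) (ctr p q r) * x (ctr p q r)
      + (∑ j, G p q r (cR p q r i) (cP p q r j) * x (cP p q r j)
      + (∑ j, G p q r (cR p q r i) (cQ p q r j) * x (cQ p q r j)
      + ∑ j, G p q r (cR p q r i) (cR p q r j) * x (cR p q r j))) = _
  rw [e0, Finset.sum_congr rfl (fun j _ => eMain j), Finset.sum_congr rfl (fun j _ => eO1 j),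
    Finset.sum_congr rfl (fun j _ => eO2 j), Finset.sum_const_zero, Finset.sum_const_zero,
    Finset.sum_add_distrib, Finset.sum_add_distrib, sum_ind, sum_ind]
  have eC : (∑ j : Fin (r-1), if i.val = 0 then 0 else
      if j.val = i.val - 1 then -x (cR p q r j) else 0)
      = if i.val = 0 then 0 else -xR x (i.val - 1) := by
    split_ifs with h0
    · simp
    · rw [sum_ind (fun j => -x (cR p q r j)) (i.val - 1)]
      simp only [xR]; split_ifs <;> simp
  rw [eC]
  have eA : (if h : i.val < r-1 then 2 * x (cR p q r ⟨i.val, h⟩) else 0)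
      = 2 * x (cR p q r i) := by rw [dif_pos i.isLt]
  have eB : (if h : i.val + 1 < r-1 then -x (cR p q r ⟨i.val + 1, h⟩) else 0)
      = -xR x (i.val + 1) := by
    simp only [xR]; split_ifs <;> simp
  rw [eA, eB]
  split_ifs <;> ring



noncomputable def wfun (m j : ℕ) : ℝ := if j ≤ m then (j:ℝ) else 0

lemma wfun_zero (m : ℕ) : wfun m 0 = 0 := by simp [wfun]

lemma wfun_big {m j : ℕ} (h : m < j) : wfun m j = 0 := by
  rw [wfun, if_neg]; omega

lemma wfun_D (m j : ℕ) :
    2 * wfun m (j+1) - wfun m (j+2) - wfun m j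
      = (if j+1 = m then (m:ℝ)+1 else 0) - (if j = m then (m:ℝ) else 0) := by
  unfold wfun
  split_ifs <;> first | (exfalso; omega) | (subst_vars; push_cast; ring1)

variable (p q r)

noncomputable def WP (m : ℕ) : TVertex p q r → ℝ
  | Sum.inr (Sum.inl i) => wfun m (p - 1 - i.val)
  | _ => 0

noncomputable def V : TVertex p q r → ℝ
  | Sum.inl _ => 1
  | Sum.inr (Sum.inl i) => ((p - 1 - i.val : ℕ) : ℝ) / p
  | Sum.inr (Sum.inr (Sum.inl i)) => ((q - 1 - i.val : ℕ) : ℝ) / q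
  | Sum.inr (Sum.inr (Sum.inr i)) => ((r - 1 - i.val : ℕ) : ℝ) / r


noncomputable def WQ (m : ℕ) : TVertex p q r → ℝ
  | Sum.inr (Sum.inr (Sum.inl i)) => wfun m (q - 1 - i.val)
  | _ => 0

noncomputable def WR (m : ℕ) : TVertex p q r → ℝ
  | Sum.inr (Sum.inr (Sum.inr i)) => wfun m (r - 1 - i.val)
  | _ => 0

variable {p q r}

lemma xP_WP (m j : ℕ) : xP (WP p q r m) j = wfun m (p-1-j) := by
  unfold xP
  split_ifs with h
  · rfl
  · have : p - 1 - j = 0 := by omega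
    rw [this, wfun_zero]

lemma xQ_WP (m j : ℕ) : xQ (WP p q r m) j = 0 := by
  unfold xQ; split_ifs <;> rfl

lemma xR_WP (m j : ℕ) : xR (WP p q r m) j = 0 := by
  unfold xR; split_ifs <;> rfl

lemma WP_ctr (m : ℕ) : WP p q r m (ctr p q r) = 0 := rfl
lemma WP_cQ (m : ℕ) (i : Fin (q-1)) : WP p q r m (cQ p q r i) = 0 := rfl
lemma WP_cR (m : ℕ) (i : Fin (r-1)) : WP p q r m (cR p q r i) = 0 := rfl

lemma mulVec_WP_ctr {m : ℕ} (hmp : m ≤ p-1) :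
    (G p q r).mulVec (WP p q r m) (ctr p q r)
      = if m + 1 = p then -(m:ℝ) else 0 := by
  rw [row_ctr, WP_ctr, xP_WP, xQ_WP, xR_WP]
  by_cases hp0 : p = 0
  · subst hp0
    norm_num [wfun_zero]
  by_cases h : m + 1 = p
  · rw [if_pos h]
    have h2 : p - 1 - 0 = m := by omega
    rw [h2]
    unfold wfun
    rw [if_pos (le_refl m)]
    ring
  · rw [if_neg h, wfun_big (by omega)]
    ring

lemma mulVec_WP_P {m : ℕ} (hm1 : 1 ≤ m) (hmp : m ≤ p-1) (i : Fin (p-1)) :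
    (G p q r).mulVec (WP p q r m) (cP p q r i)
      = (if i.val + m + 1 = p then (m:ℝ)+1 else 0)
        - (if i.val + m + 2 = p then (m:ℝ) else 0) := by
  have hiv := i.isLt
  rw [row_P]
  have h1 : WP p q r m (cP p q r i) = wfun m ((p-2-i.val)+1) := by
    show wfun m (p-1-i.val) = _
    congr 1; omega
  have h2 : xP (WP p q r m) (i.val+1) = wfun m (p-2-i.val) := by
    rw [xP_WP]; congr 1; omega
  have h3 : (if i.val = 0 then (WP p q r m) (ctr p q r) else xP (WP p q r m) (i.val-1))
      = wfun m ((p-2-i.val)+2) := by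
    split_ifs with h0
    · rw [WP_ctr, wfun_big (by omega)]
    · rw [xP_WP]; congr 1; omega
  rw [h1, h2, h3, wfun_D]
  have e1 : ((p-2-i.val)+1 = m) = (i.val + m + 1 = p) := by
    apply propext; constructor <;> (intro; omega)
  have e2 : ((p-2-i.val) = m) = (i.val + m + 2 = p) := by
    apply propext; constructor <;> (intro; omega)
  simp only [e1, e2]

lemma mulVec_WP_Q (m : ℕ) (i : Fin (q-1)) :
    (G p q r).mulVec (WP p q r m) (cQ p q r i) = 0 := by
  rw [row_Q, xQ_WP, xQ_WP, WP_ctr, WP_cQ]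
  split_ifs <;> ring

lemma mulVec_WP_R (m : ℕ) (i : Fin (r-1)) :
    (G p q r).mulVec (WP p q r m) (cR p q r i) = 0 := by
  rw [row_R, xR_WP, xR_WP, WP_ctr, WP_cR]
  split_ifs <;> ring

lemma dot_GWP (x : TVertex p q r → ℝ) {m : ℕ} (hm1 : 1 ≤ m) (hmp : m ≤ p-1) :
    dotProduct x ((G p q r).mulVec (WP p q r m))
      = ((m:ℝ)+1) * xP x (p-1-m)
        - (m:ℝ) * (if m+1 = p then x (ctr p q r) else xP x (p-2-m)) := by
  rw [dot_expand, mulVec_WP_ctr hmp]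
  have hz1 : ∀ i, x (cQ p q r i) * (G p q r).mulVec (WP p q r m) (cQ p q r i) = 0 := by
    intro i; rw [mulVec_WP_Q]; ring
  have hz2 : ∀ i, x (cR p q r i) * (G p q r).mulVec (WP p q r m) (cR p q r i) = 0 := by
    intro i; rw [mulVec_WP_R]; ring
  rw [Finset.sum_congr rfl (fun i _ => hz1 i), Finset.sum_congr rfl (fun i _ => hz2 i),
    Finset.sum_const_zero, Finset.sum_const_zero]
  have hP : ∀ i : Fin (p-1), x (cP p q r i) * (G p q r).mulVec (WP p q r m) (cP p q r i)
      = (if i.val = p-1-m then ((m:ℝ)+1) * x (cP p q r i) else 0)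
      + (if m+1 = p then 0 else if i.val = p-2-m then -((m:ℝ) * x (cP p q r i)) else 0) := by
    intro i
    have hiv := i.isLt
    rw [mulVec_WP_P hm1 hmp]
    split_ifs <;> first | ring1 | (exfalso; omega)
  rw [Finset.sum_congr rfl (fun i _ => hP i), Finset.sum_add_distrib, sum_ind]
  have eC : (∑ i : Fin (p-1), if m+1 = p then 0 else
      if i.val = p-2-m then -((m:ℝ) * x (cP p q r i)) else 0)
      = if m+1 = p then 0 else -((m:ℝ) * xP x (p-2-m)) := by
    split_ifs with h0
    · simp
    · rw [sum_ind (fun i => -((m:ℝ) * x (cP p q r i))) (p-2-m)]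
      unfold xP
      split_ifs with h <;> first | ring1 | (exfalso; omega)
  rw [eC]
  unfold xP
  split_ifs <;> first | ring1 | (exfalso; omega)

lemma V_ctr : V p q r (ctr p q r) = 1 := rfl

lemma xP_V (hp2 : 2 ≤ p) (j : ℕ) :
    xP (V p q r) j = if j < p-1 then ((p-1-j:ℕ):ℝ)/p else 0 := by
  unfold xP; split_ifs <;> rfl

lemma mulVec_V_P (hp2 : 2 ≤ p) (i : Fin (p-1)) :
    (G p q r).mulVec (V p q r) (cP p q r i) = 0 := by
  have hiv := i.isLt
  have hp0 : (p:ℝ) ≠ 0 := Nat.cast_ne_zero.mpr (by omega)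
  rw [row_P]
  have h1 : V p q r (cP p q r i) = ((p-1-i.val:ℕ):ℝ)/p := rfl
  rw [h1, xP_V hp2, xP_V hp2, V_ctr]
  by_cases h0 : i.val = 0
  · rw [if_pos h0, h0]
    by_cases h2 : 0+1 < p-1
    · rw [if_pos h2]
      rw [show p-1-0 = p-1 by omega, show p-1-(0+1) = p-2 by omega,
        Nat.cast_sub (by omega : 1 ≤ p), Nat.cast_sub (by omega : 2 ≤ p)]
      push_cast
      field_simp
      ring
    · rw [if_neg h2]
      have : p = 2 := by omega
      subst this
      norm_num
  · rw [if_neg h0]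
    rw [if_pos (show i.val - 1 < p - 1 by omega)]
    by_cases h2 : i.val+1 < p-1
    · rw [if_pos h2]
      rw [show p-1-i.val = p-(1+i.val) by omega, Nat.cast_sub (by omega),
        show p-1-(i.val-1) = p-i.val by omega, Nat.cast_sub (by omega),
        show p-1-(i.val+1) = p-(2+i.val) by omega, Nat.cast_sub (by omega)]
      push_cast
      field_simp
      ring
    · rw [if_neg h2]
      rw [show p-1-i.val = 1 by omega, show p-1-(i.val-1) = 2 by omega]
      push_cast
      ring

lemma dot_WP_GWP {m' m : ℕ} (hm'1 : 1 ≤ m') (hm'p : m' ≤ p-1)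
    (hm1 : 1 ≤ m) (hmp : m ≤ p-1) :
    dotProduct (WP p q r m') ((G p q r).mulVec (WP p q r m))
      = if m' = m then (m:ℝ)*((m:ℝ)+1) else 0 := by
  rw [dot_GWP _ hm1 hmp, xP_WP, WP_ctr, show p-1-(p-1-m) = m by omega]
  by_cases hc : m+1 = p
  · rw [if_pos hc]
    unfold wfun
    split_ifs <;> first | ring1 | (exfalso; omega)
  · rw [if_neg hc, xP_WP, show p-1-(p-2-m) = m+1 by omega]
    unfold wfun
    split_ifs <;> push_cast <;> first | ring1 | (exfalso; omega)

lemma dot_V_GWP {m : ℕ} (hp2 : 2 ≤ p) (hm1 : 1 ≤ m) (hmp : m ≤ p-1) :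
    dotProduct (V p q r) ((G p q r).mulVec (WP p q r m)) = 0 := by
  rw [dot_GWP _ hm1 hmp, xP_V hp2, if_pos (show p-1-m < p-1 by omega),
    show p-1-(p-1-m) = m by omega]
  by_cases hc : m+1 = p
  · rw [if_pos hc, V_ctr]
    have hpm : (p:ℝ) = (m:ℝ)+1 := by rw [← hc]; push_cast; ring
    rw [hpm]
    have : (m:ℝ)+1 ≠ 0 := by positivity
    field_simp
    ring
  · rw [if_neg hc, xP_V hp2, if_pos (show p-2-m < p-1 by omega),
      show p-1-(p-2-m) = m+1 by omega]
    push_cast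
    ring

lemma xQ_WQ (m j : ℕ) : xQ (WQ p q r m) j = wfun m (q-1-j) := by
  unfold xQ
  split_ifs with h
  · rfl
  · have : q - 1 - j = 0 := by omega
    rw [this, wfun_zero]

lemma xP_WQ (m j : ℕ) : xP (WQ p q r m) j = 0 := by
  unfold xP; split_ifs <;> rfl

lemma xR_WQ (m j : ℕ) : xR (WQ p q r m) j = 0 := by
  unfold xR; split_ifs <;> rfl

lemma WQ_ctr (m : ℕ) : WQ p q r m (ctr p q r) = 0 := rfl
lemma WQ_cP (m : ℕ) (i : Fin (p-1)) : WQ p q r m (cP p q r i) = 0 := rfl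
lemma WQ_cR (m : ℕ) (i : Fin (r-1)) : WQ p q r m (cR p q r i) = 0 := rfl

lemma mulVec_WQ_ctr {m : ℕ} (hmp : m ≤ q-1) :
    (G p q r).mulVec (WQ p q r m) (ctr p q r)
      = if m + 1 = q then -(m:ℝ) else 0 := by
  rw [row_ctr, WQ_ctr, xQ_WQ, xP_WQ, xR_WQ]
  by_cases hp0 : q = 0
  · subst hp0
    norm_num [wfun_zero]
  by_cases h : m + 1 = q
  · rw [if_pos h]
    have h2 : q - 1 - 0 = m := by omega
    rw [h2]
    unfold wfun
    rw [if_pos (le_refl m)]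
    ring
  · rw [if_neg h, wfun_big (by omega)]
    ring

lemma mulVec_WQ_Q {m : ℕ} (hm1 : 1 ≤ m) (hmp : m ≤ q-1) (i : Fin (q-1)) :
    (G p q r).mulVec (WQ p q r m) (cQ p q r i)
      = (if i.val + m + 1 = q then (m:ℝ)+1 else 0)
        - (if i.val + m + 2 = q then (m:ℝ) else 0) := by
  have hiv := i.isLt
  rw [row_Q]
  have h1 : WQ p q r m (cQ p q r i) = wfun m ((q-2-i.val)+1) := by
    show wfun m (q-1-i.val) = _
    congr 1; omega
  have h2 : xQ (WQ p q r m) (i.val+1) = wfun m (q-2-i.val) := by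
    rw [xQ_WQ]; congr 1; omega
  have h3 : (if i.val = 0 then (WQ p q r m) (ctr p q r) else xQ (WQ p q r m) (i.val-1))
      = wfun m ((q-2-i.val)+2) := by
    split_ifs with h0
    · rw [WQ_ctr, wfun_big (by omega)]
    · rw [xQ_WQ]; congr 1; omega
  rw [h1, h2, h3, wfun_D]
  have e1 : ((q-2-i.val)+1 = m) = (i.val + m + 1 = q) := by
    apply propext; constructor <;> (intro; omega)
  have e2 : ((q-2-i.val) = m) = (i.val + m + 2 = q) := by
    apply propext; constructor <;> (intro; omega)
  simp only [e1, e2]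

lemma mulVec_WQ_P (m : ℕ) (i : Fin (p-1)) :
    (G p q r).mulVec (WQ p q r m) (cP p q r i) = 0 := by
  rw [row_P, xP_WQ, xP_WQ, WQ_ctr, WQ_cP]
  split_ifs <;> ring

lemma mulVec_WQ_R (m : ℕ) (i : Fin (r-1)) :
    (G p q r).mulVec (WQ p q r m) (cR p q r i) = 0 := by
  rw [row_R, xR_WQ, xR_WQ, WQ_ctr, WQ_cR]
  split_ifs <;> ring

lemma dot_GWQ (x : TVertex p q r → ℝ) {m : ℕ} (hm1 : 1 ≤ m) (hmp : m ≤ q-1) :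
    dotProduct x ((G p q r).mulVec (WQ p q r m))
      = ((m:ℝ)+1) * xQ x (q-1-m)
        - (m:ℝ) * (if m+1 = q then x (ctr p q r) else xQ x (q-2-m)) := by
  rw [dot_expand, mulVec_WQ_ctr hmp]
  have hz1 : ∀ i, x (cP p q r i) * (G p q r).mulVec (WQ p q r m) (cP p q r i) = 0 := by
    intro i; rw [mulVec_WQ_P]; ring
  have hz2 : ∀ i, x (cR p q r i) * (G p q r).mulVec (WQ p q r m) (cR p q r i) = 0 := by
    intro i; rw [mulVec_WQ_R]; ring
  rw [Finset.sum_congr rfl (fun i _ => hz1 i), Finset.sum_congr rfl (fun i _ => hz2 i),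
    Finset.sum_const_zero, Finset.sum_const_zero]
  have hQ : ∀ i : Fin (q-1), x (cQ p q r i) * (G p q r).mulVec (WQ p q r m) (cQ p q r i)
      = (if i.val = q-1-m then ((m:ℝ)+1) * x (cQ p q r i) else 0)
      + (if m+1 = q then 0 else if i.val = q-2-m then -((m:ℝ) * x (cQ p q r i)) else 0) := by
    intro i
    have hiv := i.isLt
    rw [mulVec_WQ_Q hm1 hmp]
    split_ifs <;> first | ring1 | (exfalso; omega)
  rw [Finset.sum_congr rfl (fun i _ => hQ i), Finset.sum_add_distrib, sum_ind]
  have eC : (∑ i : Fin (q-1), if m+1 = q then 0 else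
      if i.val = q-2-m then -((m:ℝ) * x (cQ p q r i)) else 0)
      = if m+1 = q then 0 else -((m:ℝ) * xQ x (q-2-m)) := by
    split_ifs with h0
    · simp
    · rw [sum_ind (fun i => -((m:ℝ) * x (cQ p q r i))) (q-2-m)]
      unfold xQ
      split_ifs with h <;> first | ring1 | (exfalso; omega)
  rw [eC]
  unfold xQ
  split_ifs <;> first | ring1 | (exfalso; omega)


lemma xQ_V (hp2 : 2 ≤ q) (j : ℕ) :
    xQ (V p q r) j = if j < q-1 then ((q-1-j:ℕ):ℝ)/q else 0 := by
  unfold xQ; split_ifs <;> rfl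

lemma mulVec_V_Q (hp2 : 2 ≤ q) (i : Fin (q-1)) :
    (G p q r).mulVec (V p q r) (cQ p q r i) = 0 := by
  have hiv := i.isLt
  have hp0 : (q:ℝ) ≠ 0 := Nat.cast_ne_zero.mpr (by omega)
  rw [row_Q]
  have h1 : V p q r (cQ p q r i) = ((q-1-i.val:ℕ):ℝ)/q := rfl
  rw [h1, xQ_V hp2, xQ_V hp2, V_ctr]
  by_cases h0 : i.val = 0
  · rw [if_pos h0, h0]
    by_cases h2 : 0+1 < q-1
    · rw [if_pos h2]
      rw [show q-1-0 = q-1 by omega, show q-1-(0+1) = q-2 by omega,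
        Nat.cast_sub (by omega : 1 ≤ q), Nat.cast_sub (by omega : 2 ≤ q)]
      push_cast
      field_simp
      ring
    · rw [if_neg h2]
      have : q = 2 := by omega
      subst this
      norm_num
  · rw [if_neg h0]
    rw [if_pos (show i.val - 1 < q - 1 by omega)]
    by_cases h2 : i.val+1 < q-1
    · rw [if_pos h2]
      rw [show q-1-i.val = q-(1+i.val) by omega, Nat.cast_sub (by omega),
        show q-1-(i.val-1) = q-i.val by omega, Nat.cast_sub (by omega),
        show q-1-(i.val+1) = q-(2+i.val) by omega, Nat.cast_sub (by omega)]
      push_cast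
      field_simp
      ring
    · rw [if_neg h2]
      rw [show q-1-i.val = 1 by omega, show q-1-(i.val-1) = 2 by omega]
      push_cast
      ring

lemma dot_WQ_GWQ {m' m : ℕ} (hm'1 : 1 ≤ m') (hm'p : m' ≤ q-1)
    (hm1 : 1 ≤ m) (hmp : m ≤ q-1) :
    dotProduct (WQ p q r m') ((G p q r).mulVec (WQ p q r m))
      = if m' = m then (m:ℝ)*((m:ℝ)+1) else 0 := by
  rw [dot_GWQ _ hm1 hmp, xQ_WQ, WQ_ctr, show q-1-(q-1-m) = m by omega]
  by_cases hc : m+1 = q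
  · rw [if_pos hc]
    unfold wfun
    split_ifs <;> first | ring1 | (exfalso; omega)
  · rw [if_neg hc, xQ_WQ, show q-1-(q-2-m) = m+1 by omega]
    unfold wfun
    split_ifs <;> push_cast <;> first | ring1 | (exfalso; omega)

lemma dot_V_GWQ {m : ℕ} (hp2 : 2 ≤ q) (hm1 : 1 ≤ m) (hmp : m ≤ q-1) :
    dotProduct (V p q r) ((G p q r).mulVec (WQ p q r m)) = 0 := by
  rw [dot_GWQ _ hm1 hmp, xQ_V hp2, if_pos (show q-1-m < q-1 by omega),
    show q-1-(q-1-m) = m by omega]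
  by_cases hc : m+1 = q
  · rw [if_pos hc, V_ctr]
    have hpm : (q:ℝ) = (m:ℝ)+1 := by rw [← hc]; push_cast; ring
    rw [hpm]
    have : (m:ℝ)+1 ≠ 0 := by positivity
    field_simp
    ring
  · rw [if_neg hc, xQ_V hp2, if_pos (show q-2-m < q-1 by omega),
      show q-1-(q-2-m) = m+1 by omega]
    push_cast
    ring

lemma xR_WR (m j : ℕ) : xR (WR p q r m) j = wfun m (r-1-j) := by
  unfold xR
  split_ifs with h
  · rfl
  · have : r - 1 - j = 0 := by omega
    rw [this, wfun_zero]

lemma xQ_WR (m j : ℕ) : xQ (WR p q r m) j = 0 := by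
  unfold xQ; split_ifs <;> rfl

lemma xP_WR (m j : ℕ) : xP (WR p q r m) j = 0 := by
  unfold xP; split_ifs <;> rfl

lemma WR_ctr (m : ℕ) : WR p q r m (ctr p q r) = 0 := rfl
lemma WR_cQ (m : ℕ) (i : Fin (q-1)) : WR p q r m (cQ p q r i) = 0 := rfl
lemma WR_cP (m : ℕ) (i : Fin (p-1)) : WR p q r m (cP p q r i) = 0 := rfl

lemma mulVec_WR_ctr {m : ℕ} (hmp : m ≤ r-1) :
    (G p q r).mulVec (WR p q r m) (ctr p q r)
      = if m + 1 = r then -(m:ℝ) else 0 := by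
  rw [row_ctr, WR_ctr, xR_WR, xQ_WR, xP_WR]
  by_cases hp0 : r = 0
  · subst hp0
    norm_num [wfun_zero]
  by_cases h : m + 1 = r
  · rw [if_pos h]
    have h2 : r - 1 - 0 = m := by omega
    rw [h2]
    unfold wfun
    rw [if_pos (le_refl m)]
    ring
  · rw [if_neg h, wfun_big (by omega)]
    ring

lemma mulVec_WR_R {m : ℕ} (hm1 : 1 ≤ m) (hmp : m ≤ r-1) (i : Fin (r-1)) :
    (G p q r).mulVec (WR p q r m) (cR p q r i)
      = (if i.val + m + 1 = r then (m:ℝ)+1 else 0)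
        - (if i.val + m + 2 = r then (m:ℝ) else 0) := by
  have hiv := i.isLt
  rw [row_R]
  have h1 : WR p q r m (cR p q r i) = wfun m ((r-2-i.val)+1) := by
    show wfun m (r-1-i.val) = _
    congr 1; omega
  have h2 : xR (WR p q r m) (i.val+1) = wfun m (r-2-i.val) := by
    rw [xR_WR]; congr 1; omega
  have h3 : (if i.val = 0 then (WR p q r m) (ctr p q r) else xR (WR p q r m) (i.val-1))
      = wfun m ((r-2-i.val)+2) := by
    split_ifs with h0
    · rw [WR_ctr, wfun_big (by omega)]
    · rw [xR_WR]; congr 1; omega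
  rw [h1, h2, h3, wfun_D]
  have e1 : ((r-2-i.val)+1 = m) = (i.val + m + 1 = r) := by
    apply propext; constructor <;> (intro; omega)
  have e2 : ((r-2-i.val) = m) = (i.val + m + 2 = r) := by
    apply propext; constructor <;> (intro; omega)
  simp only [e1, e2]

lemma mulVec_WR_Q (m : ℕ) (i : Fin (q-1)) :
    (G p q r).mulVec (WR p q r m) (cQ p q r i) = 0 := by
  rw [row_Q, xQ_WR, xQ_WR, WR_ctr, WR_cQ]
  split_ifs <;> ring

lemma mulVec_WR_P (m : ℕ) (i : Fin (p-1)) :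
    (G p q r).mulVec (WR p q r m) (cP p q r i) = 0 := by
  rw [row_P, xP_WR, xP_WR, WR_ctr, WR_cP]
  split_ifs <;> ring

lemma dot_GWR (x : TVertex p q r → ℝ) {m : ℕ} (hm1 : 1 ≤ m) (hmp : m ≤ r-1) :
    dotProduct x ((G p q r).mulVec (WR p q r m))
      = ((m:ℝ)+1) * xR x (r-1-m)
        - (m:ℝ) * (if m+1 = r then x (ctr p q r) else xR x (r-2-m)) := by
  rw [dot_expand, mulVec_WR_ctr hmp]
  have hz1 : ∀ i, x (cQ p q r i) * (G p q r).mulVec (WR p q r m) (cQ p q r i) = 0 := by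
    intro i; rw [mulVec_WR_Q]; ring
  have hz2 : ∀ i, x (cP p q r i) * (G p q r).mulVec (WR p q r m) (cP p q r i) = 0 := by
    intro i; rw [mulVec_WR_P]; ring
  rw [Finset.sum_congr rfl (fun i _ => hz1 i), Finset.sum_congr rfl (fun i _ => hz2 i),
    Finset.sum_const_zero, Finset.sum_const_zero]
  have hR : ∀ i : Fin (r-1), x (cR p q r i) * (G p q r).mulVec (WR p q r m) (cR p q r i)
      = (if i.val = r-1-m then ((m:ℝ)+1) * x (cR p q r i) else 0)
      + (if m+1 = r then 0 else if i.val = r-2-m then -((m:ℝ) * x (cR p q r i)) else 0) := by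
    intro i
    have hiv := i.isLt
    rw [mulVec_WR_R hm1 hmp]
    split_ifs <;> first | ring1 | (exfalso; omega)
  rw [Finset.sum_congr rfl (fun i _ => hR i), Finset.sum_add_distrib, sum_ind]
  have eC : (∑ i : Fin (r-1), if m+1 = r then 0 else
      if i.val = r-2-m then -((m:ℝ) * x (cR p q r i)) else 0)
      = if m+1 = r then 0 else -((m:ℝ) * xR x (r-2-m)) := by
    split_ifs with h0
    · simp
    · rw [sum_ind (fun i => -((m:ℝ) * x (cR p q r i))) (r-2-m)]
      unfold xR
      split_ifs with h <;> first | ring1 | (exfalso; omega)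
  rw [eC]
  unfold xR
  split_ifs <;> first | ring1 | (exfalso; omega)


lemma xR_V (hp2 : 2 ≤ r) (j : ℕ) :
    xR (V p q r) j = if j < r-1 then ((r-1-j:ℕ):ℝ)/r else 0 := by
  unfold xR; split_ifs <;> rfl

lemma mulVec_V_R (hp2 : 2 ≤ r) (i : Fin (r-1)) :
    (G p q r).mulVec (V p q r) (cR p q r i) = 0 := by
  have hiv := i.isLt
  have hp0 : (r:ℝ) ≠ 0 := Nat.cast_ne_zero.mpr (by omega)
  rw [row_R]
  have h1 : V p q r (cR p q r i) = ((r-1-i.val:ℕ):ℝ)/r := rfl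
  rw [h1, xR_V hp2, xR_V hp2, V_ctr]
  by_cases h0 : i.val = 0
  · rw [if_pos h0, h0]
    by_cases h2 : 0+1 < r-1
    · rw [if_pos h2]
      rw [show r-1-0 = r-1 by omega, show r-1-(0+1) = r-2 by omega,
        Nat.cast_sub (by omega : 1 ≤ r), Nat.cast_sub (by omega : 2 ≤ r)]
      push_cast
      field_simp
      ring
    · rw [if_neg h2]
      have : r = 2 := by omega
      subst this
      norm_num
  · rw [if_neg h0]
    rw [if_pos (show i.val - 1 < r - 1 by omega)]
    by_cases h2 : i.val+1 < r-1
    · rw [if_pos h2]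
      rw [show r-1-i.val = r-(1+i.val) by omega, Nat.cast_sub (by omega),
        show r-1-(i.val-1) = r-i.val by omega, Nat.cast_sub (by omega),
        show r-1-(i.val+1) = r-(2+i.val) by omega, Nat.cast_sub (by omega)]
      push_cast
      field_simp
      ring
    · rw [if_neg h2]
      rw [show r-1-i.val = 1 by omega, show r-1-(i.val-1) = 2 by omega]
      push_cast
      ring

lemma dot_WR_GWR {m' m : ℕ} (hm'1 : 1 ≤ m') (hm'p : m' ≤ r-1)
    (hm1 : 1 ≤ m) (hmp : m ≤ r-1) :
    dotProduct (WR p q r m') ((G p q r).mulVec (WR p q r m))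
      = if m' = m then (m:ℝ)*((m:ℝ)+1) else 0 := by
  rw [dot_GWR _ hm1 hmp, xR_WR, WR_ctr, show r-1-(r-1-m) = m by omega]
  by_cases hc : m+1 = r
  · rw [if_pos hc]
    unfold wfun
    split_ifs <;> first | ring1 | (exfalso; omega)
  · rw [if_neg hc, xR_WR, show r-1-(r-2-m) = m+1 by omega]
    unfold wfun
    split_ifs <;> push_cast <;> first | ring1 | (exfalso; omega)

lemma dot_V_GWR {m : ℕ} (hp2 : 2 ≤ r) (hm1 : 1 ≤ m) (hmp : m ≤ r-1) :
    dotProduct (V p q r) ((G p q r).mulVec (WR p q r m)) = 0 := by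
  rw [dot_GWR _ hm1 hmp, xR_V hp2, if_pos (show r-1-m < r-1 by omega),
    show r-1-(r-1-m) = m by omega]
  by_cases hc : m+1 = r
  · rw [if_pos hc, V_ctr]
    have hpm : (r:ℝ) = (m:ℝ)+1 := by rw [← hc]; push_cast; ring
    rw [hpm]
    have : (m:ℝ)+1 ≠ 0 := by positivity
    field_simp
    ring
  · rw [if_neg hc, xR_V hp2, if_pos (show r-2-m < r-1 by omega),
      show r-1-(r-2-m) = m+1 by omega]
    push_cast
    ring


lemma mulVec_V_ctr (hp2 : 2 ≤ p) (hq2 : 2 ≤ q) (hr2 : 2 ≤ r) :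
    (G p q r).mulVec (V p q r) (ctr p q r) = (1/(p:ℝ) + 1/(q:ℝ) + 1/(r:ℝ)) - 1 := by
  have hp0 : (p:ℝ) ≠ 0 := Nat.cast_ne_zero.mpr (by omega)
  have hq0 : (q:ℝ) ≠ 0 := Nat.cast_ne_zero.mpr (by omega)
  have hr0 : (r:ℝ) ≠ 0 := Nat.cast_ne_zero.mpr (by omega)
  rw [row_ctr, V_ctr, xP_V hp2, xQ_V hq2, xR_V hr2,
    if_pos (show 0 < p-1 by omega), if_pos (show 0 < q-1 by omega),
    if_pos (show 0 < r-1 by omega),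
    show p-1-0 = p-1 by omega, show q-1-0 = q-1 by omega, show r-1-0 = r-1 by omega,
    Nat.cast_sub (show 1 ≤ p by omega), Nat.cast_sub (show 1 ≤ q by omega),
    Nat.cast_sub (show 1 ≤ r by omega)]
  push_cast
  field_simp
  ring

lemma dot_GV (hp2 : 2 ≤ p) (hq2 : 2 ≤ q) (hr2 : 2 ≤ r) (x : TVertex p q r → ℝ) :
    dotProduct x ((G p q r).mulVec (V p q r))
      = x (ctr p q r) * ((1/(p:ℝ) + 1/(q:ℝ) + 1/(r:ℝ)) - 1) := by
  rw [dot_expand, mulVec_V_ctr hp2 hq2 hr2]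
  have hz1 : ∀ i, x (cP p q r i) * (G p q r).mulVec (V p q r) (cP p q r i) = 0 := by
    intro i; rw [mulVec_V_P hp2]; ring
  have hz2 : ∀ i, x (cQ p q r i) * (G p q r).mulVec (V p q r) (cQ p q r i) = 0 := by
    intro i; rw [mulVec_V_Q hq2]; ring
  have hz3 : ∀ i, x (cR p q r i) * (G p q r).mulVec (V p q r) (cR p q r i) = 0 := by
    intro i; rw [mulVec_V_R hr2]; ring
  rw [Finset.sum_congr rfl (fun i _ => hz1 i), Finset.sum_congr rfl (fun i _ => hz2 i),
    Finset.sum_congr rfl (fun i _ => hz3 i)]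
  simp

lemma dot_WQ_GWP {m' m : ℕ} (hm1 : 1 ≤ m) (hmp : m ≤ p-1) :
    dotProduct (WQ p q r m') ((G p q r).mulVec (WP p q r m)) = 0 := by
  rw [dot_GWP _ hm1 hmp, xP_WQ, xP_WQ, WQ_ctr]
  split_ifs <;> ring

lemma dot_WR_GWP {m' m : ℕ} (hm1 : 1 ≤ m) (hmp : m ≤ p-1) :
    dotProduct (WR p q r m') ((G p q r).mulVec (WP p q r m)) = 0 := by
  rw [dot_GWP _ hm1 hmp, xP_WR, xP_WR, WR_ctr]
  split_ifs <;> ring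

lemma dot_WP_GWQ {m' m : ℕ} (hm1 : 1 ≤ m) (hmp : m ≤ q-1) :
    dotProduct (WP p q r m') ((G p q r).mulVec (WQ p q r m)) = 0 := by
  rw [dot_GWQ _ hm1 hmp, xQ_WP, xQ_WP, WP_ctr]
  split_ifs <;> ring

lemma dot_WR_GWQ {m' m : ℕ} (hm1 : 1 ≤ m) (hmp : m ≤ q-1) :
    dotProduct (WR p q r m') ((G p q r).mulVec (WQ p q r m)) = 0 := by
  rw [dot_GWQ _ hm1 hmp, xQ_WR, xQ_WR, WR_ctr]
  split_ifs <;> ring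

lemma dot_WP_GWR {m' m : ℕ} (hm1 : 1 ≤ m) (hmp : m ≤ r-1) :
    dotProduct (WP p q r m') ((G p q r).mulVec (WR p q r m)) = 0 := by
  rw [dot_GWR _ hm1 hmp, xR_WP, xR_WP, WP_ctr]
  split_ifs <;> ring

lemma dot_WQ_GWR {m' m : ℕ} (hm1 : 1 ≤ m) (hmp : m ≤ r-1) :
    dotProduct (WQ p q r m') ((G p q r).mulVec (WR p q r m)) = 0 := by
  rw [dot_GWR _ hm1 hmp, xR_WQ, xR_WQ, WQ_ctr]
  split_ifs <;> ring

lemma dot_WP_GV (hp2 : 2 ≤ p) (hq2 : 2 ≤ q) (hr2 : 2 ≤ r) (m : ℕ) :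
    dotProduct (WP p q r m) ((G p q r).mulVec (V p q r)) = 0 := by
  rw [dot_GV hp2 hq2 hr2, WP_ctr]; ring

lemma dot_WQ_GV (hp2 : 2 ≤ p) (hq2 : 2 ≤ q) (hr2 : 2 ≤ r) (m : ℕ) :
    dotProduct (WQ p q r m) ((G p q r).mulVec (V p q r)) = 0 := by
  rw [dot_GV hp2 hq2 hr2, WQ_ctr]; ring

lemma dot_WR_GV (hp2 : 2 ≤ p) (hq2 : 2 ≤ q) (hr2 : 2 ≤ r) (m : ℕ) :
    dotProduct (WR p q r m) ((G p q r).mulVec (V p q r)) = 0 := by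
  rw [dot_GV hp2 hq2 hr2, WR_ctr]; ring

lemma dot_V_GV (hp2 : 2 ≤ p) (hq2 : 2 ≤ q) (hr2 : 2 ≤ r) :
    dotProduct (V p q r) ((G p q r).mulVec (V p q r))
      = (1/(p:ℝ) + 1/(q:ℝ) + 1/(r:ℝ)) - 1 := by
  rw [dot_GV hp2 hq2 hr2, V_ctr]; ring


noncomputable def nrm (m : ℕ) : ℝ := (Real.sqrt ((m:ℝ)*((m:ℝ)+1)))⁻¹

lemma nrm_sq {m : ℕ} (hm : 1 ≤ m) : nrm m * nrm m * ((m:ℝ)*((m:ℝ)+1)) = 1 := by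
  have hm' : (0:ℝ) < m := by exact_mod_cast hm
  have h : (0:ℝ) < (m:ℝ)*((m:ℝ)+1) := by positivity
  rw [nrm, ← mul_inv, Real.mul_self_sqrt h.le, inv_mul_cancel₀ (ne_of_gt h)]

variable (p q r)

noncomputable def BV (k : Fin (p+q+r-2)) : TVertex p q r → ℝ :=
  if k.val < p-1 then nrm (k.val+1) • WP p q r (k.val+1)
  else if k.val < p+q-2 then nrm (k.val-(p-1)+1) • WQ p q r (k.val-(p-1)+1)
  else if k.val < p+q+r-3 then nrm (k.val-(p+q-2)+1) • WR p q r (k.val-(p+q-2)+1)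
  else (Real.sqrt (1 - (1/(p:ℝ)+1/(q:ℝ)+1/(r:ℝ))))⁻¹ • V p q r

variable {p q r}

lemma sds (a b : ℝ) (x y : TVertex p q r → ℝ) :
    dotProduct (a • x) ((G p q r).mulVec (b • y))
      = a * b * dotProduct x ((G p q r).mulVec y) := by
  rw [Matrix.mulVec_smul, dotProduct_smul, smul_dotProduct,
    smul_eq_mul, smul_eq_mul]
  ring

lemma key (hp2 : 2 ≤ p) (hq2 : 2 ≤ q) (hr2 : 2 ≤ r)
    (hs : (1/(p:ℝ)+1/(q:ℝ)+1/(r:ℝ)) < 1) (i j : Fin (p+q+r-2)) :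
    dotProduct (BV p q r i) ((G p q r).mulVec (BV p q r j))
      = if i = j then (if (i:ℕ) < p+q+r-3 then 1 else -1) else 0 := by
  have hiv := i.isLt
  have hjv := j.isLt
  unfold BV
  by_cases hj1 : j.val < p-1
  · rw [if_pos hj1]
    by_cases hi1 : i.val < p-1
    · rw [if_pos hi1, sds, dot_WP_GWP (by omega) (by omega) (by omega) (by omega)]
      by_cases hij : i = j
      · subst hij
        rw [if_pos rfl, if_pos rfl, if_pos (show (i:ℕ) < p+q+r-3 by omega)]
        exact nrm_sq (by omega)
      · have hne : i.val ≠ j.val := fun h => hij (Fin.ext h)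
        rw [if_neg (show ¬(i.val+1 = j.val+1) by omega), if_neg hij]
        ring
    · have hij : i ≠ j := fun h => by rw [h] at hi1; exact hi1 hj1
      rw [if_neg hi1, if_neg hij]
      by_cases hi2 : i.val < p+q-2
      · rw [if_pos hi2, sds, dot_WQ_GWP (by omega) (by omega)]; ring
      · rw [if_neg hi2]
        by_cases hi3 : i.val < p+q+r-3
        · rw [if_pos hi3, sds, dot_WR_GWP (by omega) (by omega)]; ring
        · rw [if_neg hi3, sds, dot_V_GWP hp2 (by omega) (by omega)]; ring
  · rw [if_neg hj1]
    by_cases hj2 : j.val < p+q-2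
    · rw [if_pos hj2]
      by_cases hi1 : i.val < p-1
      · have hij : i ≠ j := fun h => by rw [h] at hi1; exact hj1 hi1
        rw [if_pos hi1, if_neg hij, sds, dot_WP_GWQ (by omega) (by omega)]; ring
      · rw [if_neg hi1]
        by_cases hi2 : i.val < p+q-2
        · rw [if_pos hi2, sds, dot_WQ_GWQ (by omega) (by omega) (by omega) (by omega)]
          by_cases hij : i = j
          · subst hij
            rw [if_pos rfl, if_pos rfl, if_pos (show (i:ℕ) < p+q+r-3 by omega)]
            exact nrm_sq (by omega)
          · have hne : i.val ≠ j.val := fun h => hij (Fin.ext h)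
            rw [if_neg (show ¬(i.val-(p-1)+1 = j.val-(p-1)+1) by omega), if_neg hij]
            ring
        · have hij : i ≠ j := fun h => by rw [h] at hi2; exact hi2 hj2
          rw [if_neg hi2, if_neg hij]
          by_cases hi3 : i.val < p+q+r-3
          · rw [if_pos hi3, sds, dot_WR_GWQ (by omega) (by omega)]; ring
          · rw [if_neg hi3, sds, dot_V_GWQ hq2 (by omega) (by omega)]; ring
    · rw [if_neg hj2]
      by_cases hj3 : j.val < p+q+r-3
      · rw [if_pos hj3]
        by_cases hi1 : i.val < p-1
        · have hij : i ≠ j := fun h => by rw [h] at hi1; omega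
          rw [if_pos hi1, if_neg hij, sds, dot_WP_GWR (by omega) (by omega)]; ring
        · rw [if_neg hi1]
          by_cases hi2 : i.val < p+q-2
          · have hij : i ≠ j := fun h => by rw [h] at hi2; omega
            rw [if_pos hi2, if_neg hij, sds, dot_WQ_GWR (by omega) (by omega)]; ring
          · rw [if_neg hi2]
            by_cases hi3 : i.val < p+q+r-3
            · rw [if_pos hi3, sds,
                dot_WR_GWR (by omega) (by omega) (by omega) (by omega)]
              by_cases hij : i = j
              · subst hij
                rw [if_pos rfl, if_pos rfl, if_pos (show (i:ℕ) < p+q+r-3 by omega)]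
                exact nrm_sq (by omega)
              · have hne : i.val ≠ j.val := fun h => hij (Fin.ext h)
                rw [if_neg (show ¬(i.val-(p+q-2)+1 = j.val-(p+q-2)+1) by omega),
                  if_neg hij]
                ring
            · have hij : i ≠ j := fun h => by rw [h] at hi3; exact hi3 hj3
              rw [if_neg hi3, if_neg hij, sds, dot_V_GWR hr2 (by omega) (by omega)]
              ring
      · rw [if_neg hj3]
        by_cases hi1 : i.val < p-1
        · have hij : i ≠ j := fun h => by rw [h] at hi1; omega
          rw [if_pos hi1, if_neg hij, sds, dot_WP_GV hp2 hq2 hr2]; ring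
        · rw [if_neg hi1]
          by_cases hi2 : i.val < p+q-2
          · have hij : i ≠ j := fun h => by rw [h] at hi2; omega
            rw [if_pos hi2, if_neg hij, sds, dot_WQ_GV hp2 hq2 hr2]; ring
          · rw [if_neg hi2]
            by_cases hi3 : i.val < p+q+r-3
            · have hij : i ≠ j := fun h => by rw [h] at hi3; omega
              rw [if_pos hi3, if_neg hij, sds, dot_WR_GV hp2 hq2 hr2]; ring
            · have hij : i = j := Fin.ext (by omega)
              subst hij
              rw [if_neg hi3, sds, dot_V_GV hp2 hq2 hr2, if_pos rfl,
                if_neg (show ¬((i:ℕ) < p+q+r-3) from hi3)]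
              have h1 : (0:ℝ) < 1 - (1/(p:ℝ)+1/(q:ℝ)+1/(r:ℝ)) := by linarith
              rw [show (1/(p:ℝ)+1/(q:ℝ)+1/(r:ℝ)) - 1
                  = -(1 - (1/(p:ℝ)+1/(q:ℝ)+1/(r:ℝ))) by ring,
                ← mul_inv, Real.mul_self_sqrt h1.le, mul_neg,
                inv_mul_cancel₀ (ne_of_gt h1)]

end St12

/-- if `1/p + 1/q + 1/r < 1` and `n = p + q + r - 2`, then the real symmetric
matrix `G(p,q,r)` is nondegenerate of signature `(n-1, 1)`: there is a basis of `ℝⁿ` in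
which the associated bilinear form is `x₁y₁ + ⋯ + x_{n-1}y_{n-1} - x_n y_n`. -/
theorem stmt12 (p q r : ℕ) (hp : 1 ≤ p) (hq : 1 ≤ q) (hr : 1 ≤ r)
    (hlt : (1 : ℚ) / p + 1 / q + 1 / r < 1) :
    ∃ b : Module.Basis (Fin (p + q + r - 2)) ℝ (TVertex p q r → ℝ),
      ∀ i j, dotProduct (b i)
          (((gramT p q r).map (Int.cast : ℤ → ℝ)).mulVec (b j)) =
        if i = j then (if (i : ℕ) < p + q + r - 3 then 1 else -1) else 0 := by
  have hq0 : (0:ℚ) < (q:ℚ) := by exact_mod_cast hq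
  have hr0 : (0:ℚ) < (r:ℚ) := by exact_mod_cast hr
  have hp0 : (0:ℚ) < (p:ℚ) := by exact_mod_cast hp
  have hp2 : 2 ≤ p := by
    by_contra h
    have hp1 : p = 1 := by omega
    subst hp1
    push_cast at hlt
    norm_num at hlt
    have h1 := inv_pos.mpr hq0
    have h2 := inv_pos.mpr hr0
    linarith
  have hq2 : 2 ≤ q := by
    by_contra h
    have hq1 : q = 1 := by omega
    subst hq1
    push_cast at hlt
    norm_num at hlt
    have h1 := inv_pos.mpr hp0
    have h2 := inv_pos.mpr hr0
    linarith
  have hr2 : 2 ≤ r := by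
    by_contra h
    have hr1 : r = 1 := by omega
    subst hr1
    push_cast at hlt
    norm_num at hlt
    have h1 := inv_pos.mpr hp0
    have h2 := inv_pos.mpr hq0
    linarith
  have hs : (1/(p:ℝ)+1/(q:ℝ)+1/(r:ℝ)) < 1 := by
    have h' : ((1/(p:ℚ)+1/(q:ℚ)+1/(r:ℚ) : ℚ) : ℝ) < ((1:ℚ):ℝ) := by
      exact_mod_cast hlt
    push_cast at h'
    convert h' using 2 <;> norm_num
  have hne : Nonempty (Fin (p+q+r-2)) := ⟨⟨0, by omega⟩⟩
  have li : LinearIndependent ℝ (St12.BV p q r) := by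
    rw [Fintype.linearIndependent_iff]
    intro g hg j
    have hdot : dotProduct (∑ i, g i • St12.BV p q r i)
        ((St12.G p q r).mulVec (St12.BV p q r j)) = 0 := by
      rw [hg]; exact zero_dotProduct _
    have hexp : ∀ z, dotProduct (∑ i, g i • St12.BV p q r i) z
        = ∑ i, dotProduct (g i • St12.BV p q r i) z := by
      intro z
      rw [dotProduct]
      simp_rw [Finset.sum_apply, Finset.sum_mul]
      rw [Finset.sum_comm]
      rfl
    rw [hexp] at hdot
    have hterm : ∀ i, dotProduct (g i • St12.BV p q r i)
        ((St12.G p q r).mulVec (St12.BV p q r j))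
        = if i = j then g i * (if (j:ℕ) < p+q+r-3 then 1 else -1) else 0 := by
      intro i
      rw [smul_dotProduct, smul_eq_mul, St12.key hp2 hq2 hr2 hs i j]
      by_cases hij : i = j
      · subst hij; rw [if_pos rfl, if_pos rfl]
      · rw [if_neg hij, if_neg hij, mul_zero]
    rw [Finset.sum_congr rfl (fun i _ => hterm i),
      Finset.sum_ite_eq' Finset.univ j, if_pos (Finset.mem_univ j)] at hdot
    split_ifs at hdot
    · simpa using hdot
    · simpa using hdot
  have hcard : Fintype.card (Fin (p+q+r-2)) = Module.finrank ℝ (TVertex p q r → ℝ) := by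
    rw [Module.finrank_fintype_fun_eq_card]
    simp only [Fintype.card_fin, Fintype.card_sum, Fintype.card_unit]
    omega
  refine ⟨basisOfLinearIndependentOfCardEqFinrank li hcard, fun i j => ?_⟩
  rw [coe_basisOfLinearIndependentOfCardEqFinrank li hcard]
  exact St12.key hp2 hq2 hr2 hs i j
end

section
/- (Noether's inequality) Let N ≥ 3 and let m₀, m₁, …, m_N be integers with m₀ > 1, m₁ ≥ m₂ ≥ … ≥ m_N ≥ 0, satisfying m₀² = 1 + Σ_{i=1}^N m_i² and 3m₀ = 3 + Σ_{i=1}^N m_i. Then m₁ + m₂ + m₃ ≥ m₀ + 1. -/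
/-!
Let `a ≥ b ≥ c` be the three largest multiplicities. Every later multiplicity lies in `[0, c]`,
so the tail satisfies `∑ mᵢ² ≤ c ∑ mᵢ`, and `a ≤ m₀ - 1` because `a² < m₀²`. Eliminating the tail
sums with the two equations gives
`(m₀ - 1)(m₀ + 1) ≤ a(a - c) + b(b - c) + 3c(m₀ - 1) ≤ (m₀ - 1)(a + b + c)`,
and `m₀ > 1` lets us cancel `m₀ - 1`.
-/

open Finset

theorem sum_sq_le_mul_sum {ι R : Type*} [CommSemiring R] [PartialOrder R] [IsOrderedRing R]
    {s : Finset ι} {f : ι → R} {c : R} (hf : ∀ i ∈ s, 0 ≤ f i) (hc : ∀ i ∈ s, f i ≤ c) :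
    ∑ i ∈ s, f i ^ 2 ≤ c * ∑ i ∈ s, f i := by
  rw [mul_sum]
  gcongr with i hi
  rw [sq]
  exact mul_le_mul_of_nonneg_right (hc i hi) (hf i hi)

theorem add_one_le_add_add_of_homaloidal {R : Type*} [CommRing R] [LinearOrder R]
    [IsStrictOrderedRing R] {m0 a b c S Q : R} (hm0 : 1 < m0) (hcb : c ≤ b) (hba : b ≤ a)
    (ham0 : a ≤ m0 - 1) (hQ : Q ≤ c * S) (h1 : m0 ^ 2 = 1 + (a ^ 2 + b ^ 2 + c ^ 2 + Q))
    (h2 : 3 * m0 = 3 + (a + b + c + S)) :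
    m0 + 1 ≤ a + b + c := by
  have hS : S = 3 * (m0 - 1) - a - b - c := by linear_combination -h2
  have key : (m0 - 1) * (m0 + 1) ≤ (m0 - 1) * (a + b + c) :=
    calc (m0 - 1) * (m0 + 1) = a ^ 2 + b ^ 2 + c ^ 2 + Q := by linear_combination h1
      _ ≤ a * (a - c) + b * (b - c) + 3 * c * (m0 - 1) := by rw [hS] at hQ; linarith
      _ ≤ (m0 - 1) * (a - c) + (m0 - 1) * (b - c) + 3 * c * (m0 - 1) := by
        gcongr <;> linarith
      _ = (m0 - 1) * (a + b + c) := by ring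
  exact le_of_mul_le_mul_left key (by linarith)

/-- Noether's inequality: if `N ≥ 3`, `m₀ > 1`,
`m₁ ≥ m₂ ≥ … ≥ m_N ≥ 0` are integers with `m₀² = 1 + ∑ mᵢ²` and `3m₀ = 3 + ∑ mᵢ`,
then `m₁ + m₂ + m₃ ≥ m₀ + 1`. -/
theorem stmt13 (N : ℕ) (hN : 3 ≤ N) (m0 : ℤ) (m : Fin N → ℤ)
    (hm0 : 1 < m0) (hanti : Antitone m) (hnn : ∀ i, 0 ≤ m i)
    (h1 : m0 ^ 2 = 1 + ∑ i, (m i) ^ 2) (h2 : 3 * m0 = 3 + ∑ i, m i) :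
    m0 + 1 ≤ m ⟨0, by omega⟩ + m ⟨1, by omega⟩ + m ⟨2, by omega⟩ := by
  obtain ⟨n, rfl⟩ : ∃ n, N = 3 + n := ⟨N - 3, by omega⟩
  rw [Fin.sum_univ_add, Fin.sum_univ_three] at h1 h2
  change m0 + 1 ≤ m (Fin.castAdd n 0) + m (Fin.castAdd n 1) + m (Fin.castAdd n 2)
  have hcb : m (Fin.castAdd n 2) ≤ m (Fin.castAdd n 1) := hanti (Fin.le_def.2 (by simp))
  have hba : m (Fin.castAdd n 1) ≤ m (Fin.castAdd n 0) := hanti (Fin.le_def.2 (by simp))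
  have htail : ∑ i : Fin n, m (Fin.natAdd 3 i) ^ 2 ≤
      m (Fin.castAdd n 2) * ∑ i : Fin n, m (Fin.natAdd 3 i) :=
    sum_sq_le_mul_sum (fun i _ => hnn _) (fun i _ => hanti (Fin.le_def.2 (by simp; omega)))
  have ham0 : m (Fin.castAdd n 0) < m0 := by
    refine lt_of_abs_lt (abs_lt_of_sq_lt_sq ?_ (by positivity))
    have htail_nonneg : 0 ≤ ∑ i : Fin n, m (Fin.natAdd 3 i) ^ 2 := sum_nonneg fun i _ => sq_nonneg _
    nlinarith
  exact add_one_le_add_add_of_homaloidal hm0 hcb hba (by omega) htail h1 h2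
end

section
/- Let N ≥ 1. Consider the lattice I_{1,N} = ℤ^{N+1} with standard basis e₀, e₁, …, e_N and symmetric bilinear form B(x,y) = x₀y₀ − Σ_{i=1}^N x_i y_i, and let k_N = −3e₀ + e₁ + ⋯ + e_N. If g is a ℤ-module automorphism of ℤ^{N+1} preserving B (an isometry) such that g(e₀) = e₀ and g(k_N) = k_N, then there exists a permutation σ of {1,…,N} with g(e_i) = e_{σ(i)} for all i = 1, …, N. -/
/-!
Write `v = g eᵢ` for `1 ≤ i ≤ N`. Pairing with `g e₀ = e₀` gives `v₀ = 0`; then `B(v, v) = -1` says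
that `v₁² + ⋯ + v_N² = 1`, and `B(v, k_N) = -1` says that `v₁ + ⋯ + v_N = 1`. An integer vector with
both properties is a standard basis vector, and since `g` is injective, `i ↦ v` is a permutation.
-/

open Finset

def lorentzianForm (N : ℕ) (x y : Fin (N + 1) → ℤ) : ℤ :=
  x 0 * y 0 - ∑ i : Fin N, x i.succ * y i.succ

lemma lorentzianForm_single_zero_left {N : ℕ} (y : Fin (N + 1) → ℤ) :
    lorentzianForm N (Pi.single 0 1) y = y 0 := by
  simp [lorentzianForm, Fin.succ_ne_zero]

lemma lorentzianForm_single_succ_left {N : ℕ} (k : Fin N) (y : Fin (N + 1) → ℤ) :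
    lorentzianForm N (Pi.single k.succ 1) y = -y k.succ := by
  simp [lorentzianForm, Pi.single_apply, (Fin.succ_ne_zero k).symm, Fin.succ_inj]

lemma exists_eq_single_of_sum_mul_self_eq_one_of_sum_eq_one {ι : Type*} [Fintype ι]
    [DecidableEq ι] {f : ι → ℤ} (hsq : ∑ i, f i * f i = 1) (hsum : ∑ i, f i = 1) :
    ∃ j, f = Pi.single j 1 := by
  obtain ⟨j, hj⟩ : ∃ j, f j ≠ 0 := by
    by_contra! h
    simp [h] at hsq
  have hj_sq : f j * f j = 1 := by
    have hle : f j * f j ≤ ∑ i, f i * f i :=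
      single_le_sum (fun i _ => mul_self_nonneg (f i)) (mem_univ j)
    have hpos : 0 < f j * f j := mul_self_pos.mpr hj
    omega
  have hzero : ∀ i ≠ j, f i = 0 := by
    have hrest : ∑ i ∈ univ.erase j, f i * f i = 0 := by
      have := add_sum_erase univ (fun i => f i * f i) (mem_univ j)
      omega
    intro i hi
    exact mul_self_eq_zero.mp <|
      (sum_eq_zero_iff_of_nonneg fun i _ => mul_self_nonneg (f i)).mp hrest i (by simp [hi])
  have hj_one : f j = 1 := by
    rwa [sum_eq_single j (fun i _ hi => hzero i hi) (by simp)] at hsum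
  refine ⟨j, funext fun i => ?_⟩
  rcases eq_or_ne i j with rfl | hi
  · simp [hj_one]
  · simp [hi, hzero i hi]

lemma eq_single_succ_of_apply_zero_of_tail_eq {N : ℕ} {v : Fin (N + 1) → ℤ} {j : Fin N}
    (h0 : v 0 = 0) (htail : Fin.tail v = Pi.single j 1) : v = Pi.single j.succ 1 := by
  funext k
  cases k using Fin.cases with
  | zero => simp [h0, (Fin.succ_ne_zero j).symm]
  | succ k =>
    change Fin.tail v k = _
    simp [htail, Pi.single_apply]

lemma Function.Injective.exists_perm_of_forall_exists_eq {ι α : Type*} [Finite ι] {e : ι → α}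
    (he : Injective e) {g : α → α} (hg : Injective g) (h : ∀ i, ∃ j, g (e i) = e j) :
    ∃ σ : Equiv.Perm ι, ∀ i, g (e i) = e (σ i) := by
  choose σ hσ using h
  have hσ_inj : Injective σ := fun a b hab => he <| hg <| by rw [hσ a, hσ b, hab]
  exact ⟨Equiv.ofBijective σ (Finite.injective_iff_bijective.mp hσ_inj), hσ⟩

lemma injective_single_succ (N : ℕ) :
    Function.Injective fun i : Fin N => (Pi.single i.succ 1 : Fin (N + 1) → ℤ) := by
  intro a b hab
  have := congrFun hab a.succ
  by_contra hne
  simp [Fin.succ_inj, Ne.symm hne] at this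

lemma exists_image_single_succ_eq_single_succ {N : ℕ} {g : (Fin (N + 1) → ℤ) → Fin (N + 1) → ℤ}
    (hisom : ∀ x y, lorentzianForm N (g x) (g y) = lorentzianForm N x y)
    (he0 : g (Pi.single 0 1) = Pi.single 0 1)
    (hk : g (fun j => if j = 0 then -3 else 1) = fun j => if j = 0 then -3 else 1) (i : Fin N) :
    ∃ j : Fin N, g (Pi.single i.succ 1) = Pi.single j.succ 1 := by
  have hv₀ := hisom (Pi.single 0 1) (Pi.single i.succ 1)
  have hvv := hisom (Pi.single i.succ 1) (Pi.single i.succ 1)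
  have hvk := hisom (Pi.single i.succ 1) (fun j => if j = 0 then -3 else 1)
  rw [he0] at hv₀
  rw [hk] at hvk
  generalize g (Pi.single i.succ 1) = v at hv₀ hvv hvk ⊢
  have h0 : v 0 = 0 := by
    rwa [lorentzianForm_single_zero_left, lorentzianForm_single_zero_left,
      Pi.single_eq_of_ne (Fin.succ_ne_zero i).symm] at hv₀
  have hsq : ∑ j, Fin.tail v j * Fin.tail v j = 1 := by
    rw [lorentzianForm_single_succ_left, Pi.single_eq_same, lorentzianForm, h0] at hvv
    simp only [Fin.tail_def]
    omega
  have hsum : ∑ j, Fin.tail v j = 1 := by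
    rw [lorentzianForm_single_succ_left, lorentzianForm, h0] at hvk
    simp only [Fin.succ_ne_zero, if_false, mul_one] at hvk
    simp only [Fin.tail_def]
    omega
  obtain ⟨j, hj⟩ := exists_eq_single_of_sum_mul_self_eq_one_of_sum_eq_one hsq hsum
  exact ⟨j, eq_single_succ_of_apply_zero_of_tail_eq h0 hj⟩

theorem stmt15_general (N : ℕ)
    (g : (Fin (N + 1) → ℤ) ≃ₗ[ℤ] (Fin (N + 1) → ℤ))
    (hisom : ∀ x y : Fin (N + 1) → ℤ,
      g x 0 * g y 0 - ∑ i : Fin N, g x i.succ * g y i.succ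
        = x 0 * y 0 - ∑ i : Fin N, x i.succ * y i.succ)
    (he0 : g (Pi.single 0 1) = Pi.single 0 1)
    (hk : g (fun j => if j = 0 then -3 else 1) = fun j => if j = 0 then -3 else 1) :
    ∃ σ : Equiv.Perm (Fin N),
      ∀ i : Fin N, g (Pi.single i.succ 1) = Pi.single (σ i).succ 1 :=
  (injective_single_succ N).exists_perm_of_forall_exists_eq g.injective
    (exists_image_single_succ_eq_single_succ hisom he0 hk)

/-- an isometry `g` of the lattice `I_{1,N}` (with form
`x₀y₀ - ∑_{i=1}^N x_i y_i`) fixing `e₀` and `k_N = -3e₀ + e₁ + ⋯ + e_N` permutes the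
basis vectors `e₁, …, e_N`. -/
theorem stmt15 (N : ℕ) (hN : 1 ≤ N)
    (g : (Fin (N + 1) → ℤ) ≃ₗ[ℤ] (Fin (N + 1) → ℤ))
    (hisom : ∀ x y : Fin (N + 1) → ℤ,
      g x 0 * g y 0 - ∑ i : Fin N, g x i.succ * g y i.succ
        = x 0 * y 0 - ∑ i : Fin N, x i.succ * y i.succ)
    (he0 : g (Pi.single 0 1) = Pi.single 0 1)
    (hk : g (fun j => if j = 0 then -3 else 1) = fun j => if j = 0 then -3 else 1) :
    ∃ σ : Equiv.Perm (Fin N),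
      ∀ i : Fin N, g (Pi.single i.succ 1) = Pi.single (σ i).succ 1 :=
  stmt15_general N g hisom he0 hk
end

section
/- Let V be a finite-dimensional real vector space with a symmetric bilinear form B, let M ⊂ V be a full lattice (a free ℤ-submodule of rank dim V that spans V over ℝ), and let e ∈ V with B(e,e) ≠ 0. Define the reflection r_e : V → V by r_e(x) = x − (2B(x,e)/B(e,e))·e. If r_e(M) ⊆ M, then there exists a vector α ∈ M that is primitive in M and proportional to e (α = c·e for some nonzero real c) such that 2B(x,α) ∈ B(α,α)·ℤ for every x ∈ M. -/
/-!
The scalars `t` with `t • e ∈ M` form a subgroup of `ℝ`. A `ℤ`-basis of `M` is an `ℝ`-basis of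
`V`, and a coordinate `φ` of it with `φ e ≠ 0` takes integer values on `M`, so this subgroup lies
in `ℤ • (φ e)⁻¹` and is therefore cyclic, generated by some `c`. The reflection hypothesis says
that `2B(x,e)/B(e,e)` lies in it for every `x ∈ M`; as `M` spans `V`, one of these is nonzero, so
`c ≠ 0`. Then `ℝα ∩ M = ℤα` for `α = c • e`, which makes `α` primitive, and
`2B(x,α)/B(α,α) = (2B(x,e)/B(e,e))/c ∈ ℤ`.
-/

open Module Submodule

section Lattice

variable {V : Type*} [AddCommGroup V] [Module ℝ V]

theorem Submodule.exists_basis_span_int_eq {ι : Type*} [Fintype ι] {M : Submodule ℤ V}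
    (b : Basis ι ℤ M) (hspan : span ℝ (M : Set V) = ⊤) (hcard : Fintype.card ι = finrank ℝ V) :
    ∃ bV : Basis ι ℝ V, span ℤ (Set.range bV) = M := by
  have hM : span ℤ (Set.range (M.subtype ∘ b)) = M := by
    rw [Set.range_comp, ← map_span, b.span_eq, map_top, range_subtype]
  have hle : ⊤ ≤ span ℝ (Set.range (M.subtype ∘ b)) := by
    rw [← span_span_of_tower ℤ, hM, hspan]
  exact ⟨basisOfTopLeSpanOfCardEqFinrank _ hle hcard, by
    rw [coe_basisOfTopLeSpanOfCardEqFinrank, hM]⟩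

theorem Module.Basis.exists_smul_mem_span_int_iff {ι : Type*} (b : Basis ι ℝ V) {v : V}
    (hv : v ≠ 0) : ∃ c : ℝ, ∀ t : ℝ, t • v ∈ span ℤ (Set.range b) ↔
    t ∈ AddSubgroup.zmultiples c := by
  obtain ⟨i, hi⟩ : ∃ i, b.repr v i ≠ 0 := by
    by_contra! h
    exact hv (b.ext_elem_iff.2 (by simpa using h))
  let H : AddSubgroup ℝ :=
    (span ℤ (Set.range b)).toAddSubgroup.comap (LinearMap.toSpanSingleton ℝ V v).toAddMonoidHom
  have hH : H ≤ AddSubgroup.zmultiples (b.repr v i)⁻¹ := fun t ht => by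
    obtain ⟨k, hk⟩ := (b.mem_span_iff_repr_mem ℤ (t • v)).1 ht i
    rw [map_smul, Finsupp.smul_apply, smul_eq_mul, algebraMap_int_eq, eq_intCast] at hk
    exact ⟨k, show (k : ℤ) • _ = t by rw [zsmul_eq_mul, hk, mul_inv_cancel_right₀ hi]⟩
  obtain ⟨n, hn⟩ := (AddSubgroup.le_zmultiples_iff _ _).1 hH
  exact ⟨_, fun t => SetLike.ext_iff.1 hn t⟩

theorem Submodule.torsionFree_quotient_span_singleton {M : Submodule ℤ V} {α : V} (hα : α ∈ M)
    (hsat : ∀ t : ℝ, t • α ∈ M → ∃ k : ℤ, t = k) :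
    ∀ (n : ℤ) (y : M ⧸ span ℤ {(⟨α, hα⟩ : M)}), n • y = 0 → n = 0 ∨ y = 0 := by
  intro n y hny
  refine or_iff_not_imp_left.2 fun hn => ?_
  obtain ⟨y, rfl⟩ := Quotient.mk_surjective _ y
  rw [← Quotient.mk_smul, Quotient.mk_eq_zero, mem_span_singleton] at hny
  obtain ⟨m, hm⟩ := hny
  have hy : (y : V) = ((m : ℝ) / n) • α := by
    have hmV : (m : ℝ) • α = (n : ℝ) • (y : V) := by
      simpa only [Int.cast_smul_eq_zsmul, map_zsmul, subtype_apply] using congrArg M.subtype hm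
    rw [div_eq_inv_mul, mul_smul, hmV, smul_smul, inv_mul_cancel₀ (by exact_mod_cast hn),
      one_smul]
  obtain ⟨k, hk⟩ := hsat _ (hy ▸ y.2)
  rw [Quotient.mk_eq_zero, mem_span_singleton]
  exact ⟨k, Subtype.ext (by simp [hy, hk, Int.cast_smul_eq_zsmul])⟩

end Lattice

theorem stmt19_general {V : Type*} [AddCommGroup V] [Module ℝ V]
    (B : LinearMap.BilinForm ℝ V)
    (M : Submodule ℤ V)
    (hfree : Nonempty (Module.Basis (Fin (Module.finrank ℝ V)) ℤ M))
    (hspan : Submodule.span ℝ (M : Set V) = ⊤)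
    (e : V) (he : B e e ≠ 0)
    (hrefl : ∀ x ∈ M, x - ((2 * B x e) / B e e) • e ∈ M) :
    ∃ (α : V) (hα : α ∈ M) (c : ℝ), c ≠ 0 ∧ α = c • e ∧
      (∀ (n : ℤ) (y : M ⧸ Submodule.span ℤ {(⟨α, hα⟩ : M)}), n • y = 0 → n = 0 ∨ y = 0) ∧
      ∀ x ∈ M, ∃ n : ℤ, 2 * B x α = n * B α α := by
  obtain ⟨b⟩ := hfree
  obtain ⟨bV, hbV⟩ := M.exists_basis_span_int_eq b hspan (Fintype.card_fin _)
  obtain ⟨c, hc⟩ : ∃ c : ℝ, ∀ t : ℝ, t • e ∈ M ↔ t ∈ AddSubgroup.zmultiples c :=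
    hbV ▸ bV.exists_smul_mem_span_int_iff fun h => he (by simp [h])
  have hcoeff : ∀ x ∈ M, (2 * B x e / B e e) • e ∈ M := fun x hx => by
    simpa using M.sub_mem hx (hrefl x hx)
  obtain ⟨x, hx, hxe⟩ : ∃ x ∈ M, B x e ≠ 0 := by
    by_contra! h
    exact he (LinearMap.congr_fun (LinearMap.ext_on hspan (f := B.flip e) (g := 0) h) e)
  have hc0 : c ≠ 0 := by
    rintro rfl
    have h0 := (hc _).1 (hcoeff x hx)
    rw [AddSubgroup.zmultiples_zero_eq_bot, AddSubgroup.mem_bot, div_eq_zero_iff] at h0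
    exact h0.elim (fun h => hxe (by linarith)) he
  refine ⟨c • e, (hc c).2 (AddSubgroup.mem_zmultiples c), c, hc0, rfl,
    torsionFree_quotient_span_singleton _ fun t ht => ?_, fun z hz => ?_⟩
  · obtain ⟨k, hk⟩ := AddSubgroup.mem_zmultiples_iff.1 ((hc _).1 (smul_smul t c e ▸ ht))
    exact ⟨k, mul_right_cancel₀ hc0 (by simpa using hk.symm)⟩
  · obtain ⟨k, hk⟩ := AddSubgroup.mem_zmultiples_iff.1 ((hc _).1 (hcoeff z hz))
    refine ⟨k, ?_⟩
    rw [zsmul_eq_mul, eq_div_iff he] at hk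
    simp only [map_smul, LinearMap.smul_apply, smul_eq_mul]
    linear_combination c * hk.symm

/-- let `V` be a finite-dimensional real vector space with a symmetric
bilinear form `B`, let `M ⊂ V` be a full lattice, and let `e ∈ V` with `B(e,e) ≠ 0`. If
the reflection `r_e : x ↦ x - (2B(x,e)/B(e,e))·e` maps `M` into itself, then there is a
vector `α ∈ M`, primitive in `M` and proportional to `e`, such that
`2B(x,α) ∈ B(α,α)·ℤ` for every `x ∈ M`. -/
theorem stmt19 {V : Type*} [AddCommGroup V] [Module ℝ V] [FiniteDimensional ℝ V]
    (B : LinearMap.BilinForm ℝ V) (hsymm : ∀ x y, B x y = B y x)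
    (M : Submodule ℤ V)
    (hfree : Nonempty (Module.Basis (Fin (Module.finrank ℝ V)) ℤ M))
    (hspan : Submodule.span ℝ (M : Set V) = ⊤)
    (e : V) (he : B e e ≠ 0)
    (hrefl : ∀ x ∈ M, x - ((2 * B x e) / B e e) • e ∈ M) :
    ∃ (α : V) (hα : α ∈ M) (c : ℝ), c ≠ 0 ∧ α = c • e ∧
      (∀ (n : ℤ) (y : M ⧸ Submodule.span ℤ {(⟨α, hα⟩ : M)}), n • y = 0 → n = 0 ∨ y = 0) ∧
      ∀ x ∈ M, ∃ n : ℤ, 2 * B x α = n * B α α :=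
  stmt19_general B M hfree hspan e he hrefl
end
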